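/- arXiv:1307.4456 — 8 statements merged into one kernel-verified Lean document; each statement's English description precedes it below -/
import Mathlib

section
/- Every graph with minimum degree δ, maximum degree Δ ≥ 3, and diameter at most k has at most 2δ(Δ−1)^{k−1} + 1 vertices. -/
open Finset

lemma exists_adj_dist_pred {V : Type*} {G : SimpleGraph V} (hconn : G.Connected)
    {u v : V} {i : ℕ} (h : G.dist u v = i + 1) :
    ∃ w, G.Adj w v ∧ G.dist u w = i := by
  obtain ⟨p, hp⟩ := hconn.exists_walk_length_eq_dist u v
  rw [h] at hp
  have hq : p.reverse.length = i + 1 := by simpa using hp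
  cases hq' : p.reverse with
  | nil => rw [hq'] at hq; simp at hq
  | cons ha q =>
    rename_i w
    rw [hq'] at hq
    simp only [SimpleGraph.Walk.length_cons, Nat.add_right_cancel_iff] at hq
    refine ⟨w, ha.symm, le_antisymm ?_ ?_⟩
    · calc G.dist u w ≤ q.reverse.length := SimpleGraph.dist_le _
        _ = i := by simpa using hq
    · have := hconn.dist_triangle (u := u) (v := w) (w := v)
      have h1 : G.dist w v = 1 := SimpleGraph.dist_eq_one_iff_adj.mpr ha.symm
      omega

lemma geom_sum_le' {r k : ℕ} (hr : 2 ≤ r) (hk : 1 ≤ k) :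
    (Finset.range k).sum (fun j => r ^ j) ≤ 2 * r ^ (k - 1) := by
  induction k with
  | zero => omega
  | succ n ih =>
    rcases Nat.eq_or_lt_of_le hk with h1 | h1
    · simp [← h1]
    · have hn : 1 ≤ n := by omega
      rw [Finset.sum_range_succ]
      have h2 : 2 * r ^ (n - 1) ≤ r ^ n := by
        calc 2 * r ^ (n - 1) ≤ r * r ^ (n - 1) := Nat.mul_le_mul_right _ hr
          _ = r ^ n := by rw [← pow_succ']; congr 1; omega
      have := ih hn
      simp only [Nat.add_sub_cancel]
      omega

/-- Every graph with minimum degree `δ`, maximum degree `Δ ≥ 3`, and diameter at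
most `k` has at most `2δ(Δ−1)^{k−1} + 1` vertices. -/
theorem min_degree_upper_bound {V : Type*} [Fintype V] (G : SimpleGraph V) (δ Δ k : ℕ)
    (hΔ : 3 ≤ Δ) (hk : 1 ≤ k)
    (hmin : (∃ v : V, (G.neighborSet v).ncard = δ) ∧ ∀ v : V, δ ≤ (G.neighborSet v).ncard)
    (hmax : ∀ v : V, (G.neighborSet v).ncard ≤ Δ)
    (hconn : G.Connected)
    (hdiam : ∀ u v : V, G.dist u v ≤ k) :
    Fintype.card V ≤ 2 * δ * (Δ - 1) ^ (k - 1) + 1 := by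
  classical
  obtain ⟨⟨v0, hv0⟩, -⟩ := hmin
  have hncard : ∀ v : V, (G.neighborSet v).ncard = (G.neighborFinset v).card := by
    intro v
    rw [Set.ncard_eq_toFinset_card']
    rfl
  -- the spheres around v0
  set S : ℕ → Finset V := fun i => univ.filter (fun u => G.dist v0 u = i) with hS
  -- S 0 has at most one element
  have hS0 : (S 0).card ≤ 1 := by
    apply Finset.card_le_one.mpr
    intro a ha b hb
    simp only [hS, mem_filter] at ha hb
    have ha' := (hconn.dist_eq_zero_iff (u := v0) (v := a)).mp ha.2
    have hb' := (hconn.dist_eq_zero_iff (u := v0) (v := b)).mp hb.2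
    rw [← ha', ← hb']
  -- S 1 has at most δ elements
  have hS1 : (S 1).card ≤ δ := by
    have hsub : S 1 ⊆ G.neighborFinset v0 := by
      intro u hu
      simp only [hS, mem_filter] at hu
      exact (G.mem_neighborFinset v0 u).mpr (SimpleGraph.dist_eq_one_iff_adj.mp hu.2)
    calc (S 1).card ≤ (G.neighborFinset v0).card := Finset.card_le_card hsub
      _ = δ := by rw [← hncard, hv0]
  -- expansion bound
  have hstep : ∀ i : ℕ, 1 ≤ i → (S (i + 1)).card ≤ (Δ - 1) * (S i).card := by
    intro i hi
    have hsub : S (i + 1) ⊆ (S i).biUnion (fun w => G.neighborFinset w ∩ S (i + 1)) := by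
      intro u hu
      simp only [hS, mem_filter] at hu
      obtain ⟨w, hadj, hw⟩ := exists_adj_dist_pred hconn hu.2
      refine Finset.mem_biUnion.mpr ⟨w, ?_, ?_⟩
      · simp only [hS, mem_filter]; exact ⟨mem_univ _, hw⟩
      · refine Finset.mem_inter.mpr ⟨(G.mem_neighborFinset w u).mpr hadj, ?_⟩
        simp only [hS, mem_filter]; exact ⟨mem_univ _, hu.2⟩
    have hterm : ∀ w ∈ S i, (G.neighborFinset w ∩ S (i + 1)).card ≤ Δ - 1 := by
      intro w hw
      simp only [hS, mem_filter] at hw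
      obtain ⟨j, hj⟩ : ∃ j, i = j + 1 := ⟨i - 1, by omega⟩
      rw [hj] at hw
      obtain ⟨w', hadj', hw'⟩ := exists_adj_dist_pred hconn hw.2
      have hsub2 : G.neighborFinset w ∩ S (i + 1) ⊆ G.neighborFinset w \ {w'} := by
        intro x hx
        rw [Finset.mem_inter] at hx
        refine Finset.mem_sdiff.mpr ⟨hx.1, ?_⟩
        simp only [Finset.mem_singleton]
        intro hxe
        have := hx.2
        simp only [hS, mem_filter] at this
        rw [hxe] at this
        omega
      have hw'mem : w' ∈ G.neighborFinset w := (G.mem_neighborFinset w w').mpr hadj'.symm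
      calc (G.neighborFinset w ∩ S (i + 1)).card
          ≤ (G.neighborFinset w \ {w'}).card := Finset.card_le_card hsub2
        _ = (G.neighborFinset w).card - 1 := by
            rw [Finset.card_sdiff_of_subset (by simpa using hw'mem)]; simp
        _ ≤ Δ - 1 := by
            have := hmax w
            rw [hncard] at this
            omega
    calc (S (i + 1)).card ≤ ((S i).biUnion (fun w => G.neighborFinset w ∩ S (i + 1))).card :=
          Finset.card_le_card hsub
      _ ≤ ∑ w ∈ S i, (G.neighborFinset w ∩ S (i + 1)).card := Finset.card_biUnion_le
      _ ≤ ∑ _w ∈ S i, (Δ - 1) := Finset.sum_le_sum hterm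
      _ = (Δ - 1) * (S i).card := by rw [Finset.sum_const, smul_eq_mul, mul_comm]
  -- sphere size bound
  have hsphere : ∀ i : ℕ, (S (i + 1)).card ≤ δ * (Δ - 1) ^ i := by
    intro i
    induction i with
    | zero => simpa using hS1
    | succ n ih =>
      calc (S (n + 1 + 1)).card ≤ (Δ - 1) * (S (n + 1)).card := hstep (n + 1) (by omega)
        _ ≤ (Δ - 1) * (δ * (Δ - 1) ^ n) := Nat.mul_le_mul_left _ ih
        _ = δ * (Δ - 1) ^ (n + 1) := by ring
  -- the whole vertex set is covered by spheres of radius ≤ k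
  have hcover : Fintype.card V ≤ ∑ i ∈ range (k + 1), (S i).card := by
    rw [← Finset.card_univ]
    have : (univ : Finset V) ⊆ (range (k + 1)).biUnion S := by
      intro u _
      refine Finset.mem_biUnion.mpr ⟨G.dist v0 u, ?_, ?_⟩
      · rw [Finset.mem_range]
        exact Nat.lt_succ_of_le (hdiam v0 u)
      · simp [hS]
    calc (univ : Finset V).card ≤ ((range (k + 1)).biUnion S).card := Finset.card_le_card this
      _ ≤ ∑ i ∈ range (k + 1), (S i).card := Finset.card_biUnion_le
  -- combine
  have hsum : ∑ i ∈ range (k + 1), (S i).card ≤ 1 + δ * ∑ i ∈ range k, (Δ - 1) ^ i := by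
    rw [Finset.sum_range_succ']
    rw [Finset.mul_sum]
    have := Finset.sum_le_sum (fun i (_ : i ∈ range k) => hsphere i)
    omega
  have hgeom : ∑ i ∈ range k, (Δ - 1) ^ i ≤ 2 * (Δ - 1) ^ (k - 1) :=
    geom_sum_le' (by omega) hk
  calc Fintype.card V ≤ 1 + δ * ∑ i ∈ range k, (Δ - 1) ^ i := le_trans hcover hsum
    _ ≤ 1 + δ * (2 * (Δ - 1) ^ (k - 1)) := by
        exact Nat.add_le_add_left (Nat.mul_le_mul_left _ hgeom) _
    _ = 2 * δ * (Δ - 1) ^ (k - 1) + 1 := by ring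
end

section
/- Every graph with average degree d, maximum degree Δ ≥ 3, and diameter at most k has at most 2d(Δ−1)^{k−1} + 1 vertices. -/
open Finset

private lemma geo_sum_le {r : ℕ} (hr : 2 ≤ r) : ∀ k, 1 ≤ k →
    ∑ j ∈ Finset.range k, r ^ j ≤ 2 * r ^ (k - 1) := by
  intro k hk
  induction k with
  | zero => omega
  | succ n ih =>
    rcases Nat.eq_or_lt_of_le hk with h | h
    · simp [← h]
    · have hn : 1 ≤ n := by omega
      have := ih hn
      rw [Finset.sum_range_succ]
      have h1 : 2 * r ^ (n - 1) ≤ r ^ n := by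
        calc 2 * r ^ (n - 1) ≤ r * r ^ (n - 1) := by
              exact Nat.mul_le_mul_right _ hr
          _ = r ^ (n - 1 + 1) := by ring
          _ = r ^ n := by congr 1; omega
      have : ∑ j ∈ Finset.range n, r ^ j + r ^ n ≤ r ^ n + r ^ n := by omega
      calc ∑ j ∈ Finset.range n, r ^ j + r ^ n ≤ 2 * r ^ n := by omega
        _ = 2 * r ^ (n + 1 - 1) := by norm_num

private lemma exists_adj_dist {V : Type*} (G : SimpleGraph V) (hconn : G.Connected)
    {v u : V} {i : ℕ} (h : G.dist v u = i + 1) :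
    ∃ w, G.Adj w u ∧ G.dist v w = i := by
  have hne : G.dist v u ≠ 0 := by omega
  obtain ⟨p, hp⟩ := SimpleGraph.exists_walk_of_dist_ne_zero hne
  cases p with
  | nil => simp [SimpleGraph.dist_self] at h
  | cons hadj q =>
    obtain ⟨x, q', h', heq⟩ := SimpleGraph.Walk.exists_cons_eq_concat hadj q
    refine ⟨x, h', ?_⟩
    have hlen : q'.length + 1 = i + 1 := by
      have := hp
      rw [heq, SimpleGraph.Walk.length_concat] at this
      omega
    have hle : G.dist v x ≤ i := by
      have := SimpleGraph.dist_le q'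
      omega
    have hge : i ≤ G.dist v x := by
      have h1 : G.dist x u = 1 := SimpleGraph.dist_eq_one_iff_adj.mpr h'
      have := hconn.dist_triangle (u := v) (v := x) (w := u)
      omega
    omega

private lemma card_le_ball {V : Type*} [Fintype V] (G : SimpleGraph V) (Δ k : ℕ)
    (hΔ : 3 ≤ Δ) (hk : 1 ≤ k)
    (hmax : ∀ v : V, (G.neighborSet v).ncard ≤ Δ)
    (hconn : G.Connected)
    (hdiam : ∀ u v : V, G.dist u v ≤ k) (v : V) :
    Fintype.card V ≤ 2 * (G.neighborSet v).ncard * (Δ - 1) ^ (k - 1) + 1 := by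
  classical
  set L : ℕ → Finset V := fun i => Finset.univ.filter (fun u => G.dist v u = i) with hL
  have hncard : ∀ w : V, (G.neighborSet w).ncard = (G.neighborFinset w).card := by
    intro w
    rw [Set.ncard_eq_toFinset_card']
    congr 1
  -- L 1 is inside the neighborhood of v
  have hL1 : (L 1).card ≤ (G.neighborSet v).ncard := by
    rw [hncard]
    apply Finset.card_le_card
    intro u hu
    simp only [hL, Finset.mem_filter] at hu
    rw [SimpleGraph.mem_neighborFinset]
    exact SimpleGraph.dist_eq_one_iff_adj.mp hu.2
  -- each subsequent level grows by a factor at most Δ - 1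
  have hstep : ∀ i : ℕ, (L (i + 2)).card ≤ (Δ - 1) * (L (i + 1)).card := by
    intro i
    have hsub : L (i + 2) ⊆ (L (i + 1)).biUnion
        (fun w => G.neighborFinset w ∩ L (i + 2)) := by
      intro u hu
      simp only [hL, Finset.mem_filter] at hu
      obtain ⟨w, hadj, hdw⟩ := exists_adj_dist G hconn hu.2
      rw [Finset.mem_biUnion]
      refine ⟨w, ?_, ?_⟩
      · simp [hL, hdw]
      · rw [Finset.mem_inter, SimpleGraph.mem_neighborFinset]
        exact ⟨hadj, by simp [hL, hu.2]⟩
    calc (L (i + 2)).card ≤ ((L (i + 1)).biUnion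
          (fun w => G.neighborFinset w ∩ L (i + 2))).card := Finset.card_le_card hsub
      _ ≤ ∑ w ∈ L (i + 1), (G.neighborFinset w ∩ L (i + 2)).card :=
          Finset.card_biUnion_le
      _ ≤ ∑ _w ∈ L (i + 1), (Δ - 1) := by
          apply Finset.sum_le_sum
          intro w hw
          simp only [hL, Finset.mem_filter] at hw
          obtain ⟨w', hadj', hdw'⟩ := exists_adj_dist G hconn hw.2
          have hsub2 : G.neighborFinset w ∩ L (i + 2) ⊆
              (G.neighborFinset w).erase w' := by
            intro x hx
            rw [Finset.mem_inter] at hx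
            rw [Finset.mem_erase]
            refine ⟨?_, hx.1⟩
            rintro rfl
            have := hx.2
            simp only [hL, Finset.mem_filter] at this
            omega
          calc (G.neighborFinset w ∩ L (i + 2)).card ≤
                ((G.neighborFinset w).erase w').card := Finset.card_le_card hsub2
            _ = (G.neighborFinset w).card - 1 := by
                rw [Finset.card_erase_of_mem]
                rw [SimpleGraph.mem_neighborFinset]
                exact hadj'.symm
            _ ≤ Δ - 1 := by
                have := hmax w
                rw [hncard] at this
                omega
      _ = (Δ - 1) * (L (i + 1)).card := by
          rw [Finset.sum_const, smul_eq_mul, mul_comm]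
  -- level i+1 has at most deg(v) * (Δ-1)^i vertices
  have hlev : ∀ i : ℕ, (L (i + 1)).card ≤ (G.neighborSet v).ncard * (Δ - 1) ^ i := by
    intro i
    induction i with
    | zero => simpa using hL1
    | succ n ih =>
      calc (L (n + 2)).card ≤ (Δ - 1) * (L (n + 1)).card := hstep n
        _ ≤ (Δ - 1) * ((G.neighborSet v).ncard * (Δ - 1) ^ n) :=
            Nat.mul_le_mul_left _ ih
        _ = (G.neighborSet v).ncard * (Δ - 1) ^ (n + 1) := by ring
  -- everything is in some level up to k
  have hcover : (Finset.univ : Finset V) ⊆ (Finset.range (k + 1)).biUnion L := by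
    intro u _
    rw [Finset.mem_biUnion]
    exact ⟨G.dist v u, by simp [Nat.lt_succ_iff, hdiam v u], by simp [hL]⟩
  have hL0 : (L 0).card ≤ 1 := by
    apply Finset.card_le_one.mpr
    intro a ha b hb
    simp only [hL, Finset.mem_filter] at ha hb
    have ha' := (hconn.dist_eq_zero_iff).mp ha.2
    have hb' := (hconn.dist_eq_zero_iff).mp hb.2
    exact ha'.symm.trans hb'
  calc Fintype.card V = (Finset.univ : Finset V).card := rfl
    _ ≤ ((Finset.range (k + 1)).biUnion L).card := Finset.card_le_card hcover
    _ ≤ ∑ i ∈ Finset.range (k + 1), (L i).card := Finset.card_biUnion_le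
    _ = (L 0).card + ∑ i ∈ Finset.range k, (L (i + 1)).card := by
        rw [Finset.sum_range_succ']
        omega
    _ ≤ 1 + ∑ i ∈ Finset.range k, (G.neighborSet v).ncard * (Δ - 1) ^ i := by
        have := Finset.sum_le_sum (fun i (_ : i ∈ Finset.range k) => hlev i)
        omega
    _ = 1 + (G.neighborSet v).ncard * ∑ i ∈ Finset.range k, (Δ - 1) ^ i := by
        rw [Finset.mul_sum]
    _ ≤ 1 + (G.neighborSet v).ncard * (2 * (Δ - 1) ^ (k - 1)) := by
        have hr : 2 ≤ Δ - 1 := by omega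
        have := geo_sum_le hr k hk
        have := Nat.mul_le_mul_left (G.neighborSet v).ncard this
        omega
    _ = 2 * (G.neighborSet v).ncard * (Δ - 1) ^ (k - 1) + 1 := by ring

/-- Every graph with average degree `d`, maximum degree `Δ ≥ 3`, and diameter at
most `k` has at most `2d(Δ−1)^{k−1} + 1` vertices. -/
theorem average_degree_upper_bound {V : Type*} [Fintype V] (G : SimpleGraph V) (d : ℚ) (Δ k : ℕ)
    (hΔ : 3 ≤ Δ) (hk : 1 ≤ k)
    (havg : d = 2 * G.edgeSet.ncard / Fintype.card V)
    (hmax : ∀ v : V, (G.neighborSet v).ncard ≤ Δ)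
    (hconn : G.Connected)
    (hdiam : ∀ u v : V, G.dist u v ≤ k) :
    (Fintype.card V : ℚ) ≤ 2 * d * ((Δ : ℚ) - 1) ^ (k - 1) + 1 := by
  classical
  have hne : Nonempty V := hconn.nonempty
  set n := Fintype.card V with hn
  have hnpos : 0 < n := Fintype.card_pos
  -- sum the ball bound over all vertices
  have hsum : n * n ≤ 4 * G.edgeFinset.card * (Δ - 1) ^ (k - 1) + n := by
    have h1 : ∑ v : V, n ≤
        ∑ v : V, (2 * (G.neighborSet v).ncard * (Δ - 1) ^ (k - 1) + 1) :=
      Finset.sum_le_sum (fun v _ => card_le_ball G Δ k hΔ hk hmax hconn hdiam v)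
    have h2 : ∑ v : V, n = n * n := by
      simp [Finset.sum_const, smul_eq_mul, hn, mul_comm]
    have hdeg : ∀ v : V, (G.neighborSet v).ncard = G.degree v := by
      intro v
      rw [Set.ncard_eq_toFinset_card']
      rfl
    have h3 : ∑ v : V, (2 * (G.neighborSet v).ncard * (Δ - 1) ^ (k - 1) + 1)
        = 4 * G.edgeFinset.card * (Δ - 1) ^ (k - 1) + n := by
      have hsd : ∑ v : V, 2 * (G.neighborSet v).ncard * (Δ - 1) ^ (k - 1)
          = 2 * (∑ v : V, G.degree v) * (Δ - 1) ^ (k - 1) := by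
        rw [Finset.mul_sum, Finset.sum_mul]
        apply Finset.sum_congr rfl
        intro v _
        rw [hdeg v]
      rw [Finset.sum_add_distrib, Finset.sum_const, smul_eq_mul, mul_one, hsd,
        G.sum_degrees_eq_twice_card_edges]
      have h4 : 2 * (2 * G.edgeFinset.card) * (Δ - 1) ^ (k - 1)
          = 4 * G.edgeFinset.card * (Δ - 1) ^ (k - 1) := by ring
      rw [h4]
      rfl
    omega
  -- translate to ℚ
  have hm : (G.edgeSet.ncard : ℚ) = (G.edgeFinset.card : ℚ) := by
    norm_cast
    rw [Set.ncard_eq_toFinset_card']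
    try rfl
  have hΔ1 : ((Δ - 1 : ℕ) : ℚ) = (Δ : ℚ) - 1 := by
    have : 1 ≤ Δ := by omega
    push_cast [this]
    try ring
  have hsumQ : (n : ℚ) * n ≤ 4 * G.edgeFinset.card * ((Δ : ℚ) - 1) ^ (k - 1) + n := by
    have := hsum
    have : ((n * n : ℕ) : ℚ) ≤ ((4 * G.edgeFinset.card * (Δ - 1) ^ (k - 1) + n : ℕ) : ℚ) := by
      exact_mod_cast this
    push_cast [hΔ1] at this
    linarith
  rw [havg, hm]
  have hnQ : (0 : ℚ) < n := by exact_mod_cast hnpos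
  rw [← sub_nonneg]
  have key : 2 * (2 * (G.edgeFinset.card : ℚ) / n) * ((Δ : ℚ) - 1) ^ (k - 1) + 1 - n
      = (4 * G.edgeFinset.card * ((Δ : ℚ) - 1) ^ (k - 1) + n - n * n) / n := by
    field_simp
    try ring
    try tauto
  rw [key]
  apply div_nonneg _ hnQ.le
  linarith
end

section
/- Every graph with arboricity at most b, diameter at most k, and maximum degree at most Δ has at most 4k(2b)^k · Δ^{⌊k/2⌋} + 1 vertices. -/
/-!
Orient every forest towards a root in each of its components: each vertex then has at most one
out-neighbour per forest, so `G` gets an orientation with out-degrees at most `b` (and in-degrees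
at most `Δ`). Every pair of vertices is joined by a walk of length `i ≤ k`, and each step of it
goes along or against the orientation. For a fixed pattern of directions, the walks are counted
from their first vertex with a factor `b` per forward and `Δ` per backward step, or from their
last vertex with the factors exchanged; one of the two counts has at most `⌊i/2⌋` factors `Δ`.
Summing over the `2^i` patterns and over `i ≤ k` gives `n² ≤ n ∑_{i ≤ k} (2b)^i Δ^⌊i/2⌋`.
-/

/-- `G` has arboricity at most `b`: the edge set of `G` is the union of the edge
sets of `b` forests. -/
def ArboricityLE {V : Type*} (G : SimpleGraph V) (b : ℕ) : Prop :=
  ∃ F : Fin b → SimpleGraph V, (∀ i, (F i).IsAcyclic) ∧ (⨆ i, F i) = G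

open Finset SimpleGraph

namespace SimpleGraph

variable {V : Type*}

theorem IsAcyclic.exists_parent {F : SimpleGraph V} (hF : F.IsAcyclic) :
    ∃ parent : V → V, ∀ x y, F.Adj x y → parent x = y ∨ parent y = x := by
  let root : V → V := fun x => (F.connectedComponentMk x).out
  have root_eq : ∀ x y, F.Reachable x y → root x = root y := fun x y h =>
    congrArg Quot.out (ConnectedComponent.sound h)
  have reach_root : ∀ x, F.Reachable x (root x) := fun x =>
    ConnectedComponent.exact (F.connectedComponentMk x).out_eq.symm
  choose geo hgeo using fun x => (reach_root x).exists_walk_length_eq_dist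
  have snd_geo : ∀ x y, F.Adj x y → F.dist (root x) x = F.dist (root x) y + 1 →
      (geo x).snd = y := by
    intro x y hxy hd
    let q := Walk.cons hxy ((geo y).copy rfl (root_eq y x hxy.symm.reachable))
    have hq : q.length = F.dist x (root x) := by
      simp [q, hgeo, root_eq y x hxy.symm.reachable, dist_comm (u := y), dist_comm (u := x), hd]
    have := hF.subsingleton_path x (root x) |>.elim
      ⟨geo x, (geo x).isPath_of_length_eq_dist (hgeo x)⟩ ⟨q, q.isPath_of_length_eq_dist hq⟩
    rw [Subtype.mk.injEq] at this
    simp [this, q]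
  refine ⟨fun x => (geo x).snd, fun x y hxy => ?_⟩
  rcases hF.dist_eq_dist_add_one_of_adj_of_reachable (root x) hxy (reach_root x).symm with h | h
  · left
    exact snd_geo x y hxy h
  · right
    rw [root_eq x y hxy.reachable] at h
    exact snd_geo y x hxy.symm h

end SimpleGraph

open scoped Classical in
theorem ArboricityLE.exists_orientation {V : Type*} [Fintype V] {G : SimpleGraph V} {b : ℕ}
    (h : ArboricityLE G b) :
    ∃ R : V → V → Prop, (∀ x y, R x y → G.Adj x y) ∧ (∀ x y, G.Adj x y → R x y ∨ R y x) ∧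
      ∀ x, #{y | R x y} ≤ b := by
  obtain ⟨F, hF, rfl⟩ := h
  choose parent hparent using fun i => (hF i).exists_parent
  refine ⟨fun x y => (⨆ i, F i).Adj x y ∧ ∃ i, parent i x = y, fun x y h => h.1,
    fun x y hxy => ?_, fun x => ?_⟩
  · obtain ⟨i, hi⟩ := iSup_adj.mp hxy
    rcases hparent i x y hi with h | h
    exacts [.inl ⟨hxy, i, h⟩, .inr ⟨hxy.symm, i, h⟩]
  · exact (card_le_card (t := univ.image fun i => parent i x) fun y => by simp).trans
      (card_image_le.trans_eq (by simp))

section Zigzag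

variable {V : Type*}

/-- `Zigzag R s u v`: a walk from `u` to `v` whose `j`-th step goes along `R` if `s[j] = true` and
against `R` otherwise. -/
def Zigzag (R : V → V → Prop) : List Bool → V → V → Prop
  | [] => Eq
  | a :: s => fun u v => ∃ w, (bif a then R u w else R w u) ∧ Zigzag R s w v

@[simp] theorem zigzag_nil {R : V → V → Prop} {u v : V} : Zigzag R [] u v ↔ u = v := Iff.rfl

@[simp] theorem zigzag_cons {R : V → V → Prop} {a : Bool} {s : List Bool} {u v : V} :
    Zigzag R (a :: s) u v ↔ ∃ w, (bif a then R u w else R w u) ∧ Zigzag R s w v := Iff.rfl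

theorem SimpleGraph.Walk.exists_zigzag {G : SimpleGraph V} {R : V → V → Prop}
    (hR : ∀ x y, G.Adj x y → R x y ∨ R y x) {u v : V} (p : G.Walk u v) :
    ∃ s : List Bool, s.length = p.length ∧ Zigzag R s u v := by
  induction p with
  | nil => exact ⟨[], rfl, rfl⟩
  | cons h p ih =>
    obtain ⟨s, hs, hz⟩ := ih
    rcases hR _ _ h with h' | h'
    · exact ⟨true :: s, by simp [hs], _, h', hz⟩
    · exact ⟨false :: s, by simp [hs], _, h', hz⟩

open scoped Classical

theorem Finset.card_exists_and_le {α β : Type*} [Fintype α] [Fintype β] (p : α → Prop)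
    (T : α → β → Prop) {c d : ℕ} (hp : #{w | p w} ≤ c) (hT : ∀ w, #{v | T w v} ≤ d) :
    #{v | ∃ w, p w ∧ T w v} ≤ c * d :=
  calc #{v | ∃ w, p w ∧ T w v} ≤ #(({w | p w} : Finset α).biUnion fun w => {v | T w v}) :=
        card_le_card fun v => by simp
    _ ≤ #{w | p w} * d := card_biUnion_le_card_mul _ _ _ fun w _ => hT w
    _ ≤ c * d := Nat.mul_le_mul_right _ hp

variable [Fintype V] {R : V → V → Prop} {b Δ : ℕ}

theorem card_zigzag_targets_le (hout : ∀ x, #{y | R x y} ≤ b) (hin : ∀ y, #{x | R x y} ≤ Δ)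
    (s : List Bool) (u : V) : #{v | Zigzag R s u v} ≤ b ^ s.count true * Δ ^ s.count false := by
  induction s generalizing u with
  | nil => exact card_le_one.mpr fun _ h₁ _ h₂ => by simp_all
  | cons a s ih =>
    simp only [zigzag_cons]
    refine (card_exists_and_le _ _ (c := bif a then b else Δ) ?_ ih).trans_eq ?_
    · cases a; exacts [hin u, hout u]
    · cases a <;> simp [pow_succ] <;> ring

theorem card_zigzag_sources_le (hout : ∀ x, #{y | R x y} ≤ b) (hin : ∀ y, #{x | R x y} ≤ Δ)
    (s : List Bool) (v : V) : #{u | Zigzag R s u v} ≤ Δ ^ s.count true * b ^ s.count false := by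
  induction s generalizing v with
  | nil => exact card_le_one.mpr fun _ h₁ _ h₂ => by simp_all
  | cons a s ih =>
    simp only [zigzag_cons, and_comm (a := bif a then _ else _)]
    refine (card_exists_and_le _ (fun w u => bif a then R u w else R w u)
      (d := bif a then Δ else b) (ih v) fun w => ?_).trans_eq ?_
    · cases a; exacts [hout w, hin w]
    · cases a <;> simp [pow_succ] <;> ring

theorem card_zigzag_pairs_le (hout : ∀ x, #{y | R x y} ≤ b) (hin : ∀ y, #{x | R x y} ≤ Δ)
    (hb : 1 ≤ b) (hΔ : 1 ≤ Δ) (s : List Bool) :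
    #{x : V × V | Zigzag R s x.1 x.2} ≤ Fintype.card V * (b ^ s.length * Δ ^ (s.length / 2)) := by
  have hlen := s.count_true_add_count_false
  rcases le_total (s.count false) (s.count true) with hqp | hpq
  · calc #{x : V × V | Zigzag R s x.1 x.2} = ∑ u, #{v | Zigzag R s u v} := by
          simp only [card_filter, Fintype.sum_prod_type]
      _ ≤ ∑ _u : V, b ^ s.length * Δ ^ (s.length / 2) := sum_le_sum fun u _ =>
          (card_zigzag_targets_le hout hin s u).trans <|
            Nat.mul_le_mul (Nat.pow_le_pow_right hb (by omega)) (Nat.pow_le_pow_right hΔ (by omega))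
      _ = _ := by simp
  · calc #{x : V × V | Zigzag R s x.1 x.2} = ∑ v, #{u | Zigzag R s u v} := by
          simp only [card_filter, Fintype.sum_prod_type_right]
      _ ≤ ∑ _v : V, b ^ s.length * Δ ^ (s.length / 2) := sum_le_sum fun v _ =>
          (card_zigzag_sources_le hout hin s v).trans <| (mul_comm _ _).trans_le <|
            Nat.mul_le_mul (Nat.pow_le_pow_right hb (by omega)) (Nat.pow_le_pow_right hΔ (by omega))
      _ = _ := by simp

theorem card_le_sum_of_forall_zigzag (hout : ∀ x, #{y | R x y} ≤ b)
    (hin : ∀ y, #{x | R x y} ≤ Δ) (hb : 1 ≤ b) (hΔ : 1 ≤ Δ) (k : ℕ)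
    (hk : ∀ u v : V, ∃ s : List Bool, s.length ≤ k ∧ Zigzag R s u v) :
    Fintype.card V ≤ ∑ i ∈ range (k + 1), (2 * b) ^ i * Δ ^ (i / 2) := by
  set n := Fintype.card V
  have hcover : (univ : Finset (V × V)) ⊆ (range (k + 1)).biUnion fun i =>
      (univ : Finset (List.Vector Bool i)).biUnion fun s => {x | Zigzag R s.toList x.1 x.2} := by
    rintro ⟨u, v⟩ -
    obtain ⟨s, hs, hz⟩ := hk u v
    simp only [mem_biUnion, mem_range, mem_univ, mem_filter, true_and]
    exact ⟨s.length, by omega, ⟨s, rfl⟩, hz⟩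
  have hsq : n * n ≤ n * ∑ i ∈ range (k + 1), (2 * b) ^ i * Δ ^ (i / 2) :=
    calc n * n = #(univ : Finset (V × V)) := by simp [n]
      _ ≤ ∑ i ∈ range (k + 1), ∑ s : List.Vector Bool i, #{x : V × V | Zigzag R s.toList x.1 x.2} :=
          (card_le_card hcover).trans <| card_biUnion_le.trans <|
            sum_le_sum fun i _ => card_biUnion_le
      _ ≤ ∑ i ∈ range (k + 1), ∑ _s : List.Vector Bool i, n * (b ^ i * Δ ^ (i / 2)) :=
          sum_le_sum fun i _ => sum_le_sum fun s _ => by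
            simpa only [List.Vector.toList_length] using
              card_zigzag_pairs_le hout hin hb hΔ s.toList
      _ = n * ∑ i ∈ range (k + 1), (2 * b) ^ i * Δ ^ (i / 2) := by
          simp only [sum_const, card_univ, card_vector, Fintype.card_bool, smul_eq_mul, mul_sum]
          exact sum_congr rfl fun i _ => by ring
  rcases Nat.eq_zero_or_pos n with hn | hn
  · exact hn ▸ Nat.zero_le _
  · exact Nat.le_of_mul_le_mul_left hsq hn

end Zigzag

theorem sum_range_pow_mul_pow_div_two_le {b Δ : ℕ} (hb : 1 ≤ b) (hΔ : 1 ≤ Δ) (k : ℕ) :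
    ∑ i ∈ range (k + 1), (2 * b) ^ i * Δ ^ (i / 2) ≤ k * ((2 * b) ^ k * Δ ^ (k / 2)) + 1 := by
  induction k with
  | zero => simp
  | succ k ih =>
    have hmono : (2 * b) ^ k * Δ ^ (k / 2) ≤ (2 * b) ^ (k + 1) * Δ ^ ((k + 1) / 2) :=
      Nat.mul_le_mul (Nat.pow_le_pow_right (by omega) k.le_succ)
        (Nat.pow_le_pow_right hΔ (by omega))
    rw [sum_range_succ]
    nlinarith [Nat.mul_le_mul_left k hmono]

/-- Every graph with arboricity at most `b`, diameter at most `k`, and maximum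
degree at most `Δ` has at most `4k(2b)^k · Δ^{⌊k/2⌋} + 1` vertices. -/
theorem arboricity_upper_bound {V : Type*} [Fintype V] (G : SimpleGraph V) (b k Δ : ℕ)
    (harb : ArboricityLE G b)
    (hmax : ∀ v : V, (G.neighborSet v).ncard ≤ Δ)
    (hconn : G.Connected)
    (hdiam : ∀ u v : V, G.dist u v ≤ k) :
    Fintype.card V ≤ 4 * k * (2 * b) ^ k * Δ ^ (k / 2) + 1 := by
  classical
  obtain ⟨R, hRG, hGR, hout⟩ := harb.exists_orientation
  have hin : ∀ y, #{x | R x y} ≤ Δ := fun y =>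
    calc #{x | R x y} ≤ #{x | G.Adj y x} := card_le_card <| monotone_filter_right _
          fun x _ h => (hRG x y h).symm
      _ = (G.neighborSet y).ncard := by rw [Set.ncard_eq_toFinset_card']; simp
      _ ≤ Δ := hmax y
  rcases le_or_gt (Fintype.card V) 1 with hV | hV
  · exact hV.trans (Nat.le_add_left _ _)
  obtain ⟨x, y, hxy⟩ : ∃ x y, R x y := by
    obtain ⟨u, v, huv⟩ := Fintype.exists_pair_of_one_lt_card hV
    obtain ⟨p⟩ := hconn u v
    rcases hGR _ _ (p.adj_snd (Walk.not_nil_of_ne huv)) with h | h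
    exacts [⟨_, _, h⟩, ⟨_, _, h⟩]
  have hb : 1 ≤ b := (hout x).trans' <| card_pos.mpr ⟨y, by simpa using hxy⟩
  have hΔ : 1 ≤ Δ := (hin y).trans' <| card_pos.mpr ⟨x, by simpa using hxy⟩
  have hzigzag : ∀ u v, ∃ s : List Bool, s.length ≤ k ∧ Zigzag R s u v := fun u v => by
    obtain ⟨p, hp⟩ := hconn.exists_walk_length_eq_dist u v
    obtain ⟨s, hs, hz⟩ := p.exists_zigzag hGR
    exact ⟨s, hs ▸ hp ▸ hdiam u v, hz⟩
  calc Fintype.card V ≤ ∑ i ∈ range (k + 1), (2 * b) ^ i * Δ ^ (i / 2) :=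
        card_le_sum_of_forall_zigzag hout hin hb hΔ k hzigzag
    _ ≤ k * ((2 * b) ^ k * Δ ^ (k / 2)) + 1 := sum_range_pow_mul_pow_div_two_le hb hΔ k
    _ ≤ 4 * k * (2 * b) ^ k * Δ ^ (k / 2) + 1 := by ring_nf; omega
end

section
/- If every edge of a graph G can be oriented so that each vertex has outdegree at most b, and G has diameter at most k and maximum degree at most Δ, then for every vertex v the number of vertices reachable from v by a path of length ℓ ≤ k containing at least ⌈ℓ/2⌉ forward-oriented edges is at most ∑_{ℓ=1}^{k} ∑_{i=⌈ℓ/2⌉}^{ℓ} C(ℓ,i) b^i Δ^{ℓ−i} ≤ 2k(2b)^k Δ^{⌊k/2⌋}. -/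
/-!
Every vertex counted is the last entry of a list `x₁, …, x_ℓ` such that `v, x₁, …, x_ℓ` is a
walk with at least `⌈ℓ/2⌉` forward edges. Choosing the list one vertex at a time, a forward
step has at most `b` choices and any step at most `Δ`, so the lists of length `ℓ` with at
least `m` forward steps number at most `T(ℓ, m) = ∑_{i ≥ m} C(ℓ,i) b^i Δ^(ℓ-i)`: this tail of
the binomial expansion of `(b + Δ)^ℓ` obeys Pascal's recurrence
`T(ℓ + 1, m) = b T(ℓ, m - 1) + Δ T(ℓ, m)`. For the closed bound, a term with `i ≥ ⌈ℓ/2⌉` has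
at most `⌊ℓ/2⌋` backward steps, so it is at most `C(ℓ,i) b^k Δ^⌊k/2⌋`, and
`∑_i C(ℓ,i) ≤ 2^k`.
-/

open Finset

def binomTail (b Δ ℓ m : ℕ) : ℕ :=
  ∑ i ∈ Icc m ℓ, ℓ.choose i * b ^ i * Δ ^ (ℓ - i)

theorem binomTail_zero_right (b Δ ℓ : ℕ) : binomTail b Δ ℓ 0 = (b + Δ) ^ ℓ := by
  rw [binomTail, add_pow, ← Nat.Ico_zero_eq_range, Ico_add_one_right_eq_Icc]
  exact sum_congr rfl fun i _ => by rw [Nat.cast_id]; ring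

theorem binomTail_succ_succ (b Δ ℓ m : ℕ) :
    binomTail b Δ (ℓ + 1) (m + 1) = b * binomTail b Δ ℓ m + Δ * binomTail b Δ ℓ (m + 1) := by
  have shift : ∀ f : ℕ → ℕ, ∑ i ∈ Icc (m + 1) (ℓ + 1), f i = ∑ i ∈ Icc m ℓ, f (i + 1) := by
    intro f
    rw [← map_add_right_Icc, sum_map]
    rfl
  have hright : Δ * binomTail b Δ ℓ (m + 1) =
      ∑ i ∈ Icc m ℓ, ℓ.choose (i + 1) * b ^ (i + 1) * Δ ^ (ℓ - i) := calc
    _ = ∑ i ∈ Icc (m + 1) ℓ, ℓ.choose i * b ^ i * Δ ^ (ℓ + 1 - i) := by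
      rw [binomTail, mul_sum]
      refine sum_congr rfl fun i hi => ?_
      rw [Nat.sub_add_comm (mem_Icc.mp hi).2, pow_succ]
      ring
    _ = ∑ i ∈ Icc (m + 1) (ℓ + 1), ℓ.choose i * b ^ i * Δ ^ (ℓ + 1 - i) := by
      refine sum_subset (Icc_subset_Icc_right ℓ.le_succ) fun i hi hi' => ?_
      rw [Nat.choose_eq_zero_of_lt (by grind), zero_mul, zero_mul]
    _ = _ := by rw [shift]; simp only [Nat.add_sub_add_right]
  rw [hright, binomTail, binomTail, mul_sum, shift, ← sum_add_distrib]
  refine sum_congr rfl fun i _ => ?_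
  rw [Nat.choose_succ_succ, Nat.add_sub_add_right]
  ring

theorem binomTail_succ (b Δ ℓ m : ℕ) :
    binomTail b Δ (ℓ + 1) m = b * binomTail b Δ ℓ (m - 1) + Δ * binomTail b Δ ℓ m := by
  cases m with
  | zero => rw [Nat.zero_sub, binomTail_zero_right, binomTail_zero_right]; ring
  | succ m => exact binomTail_succ_succ b Δ ℓ m

theorem binomTail_half_le {b Δ ℓ k : ℕ} (hΔ : 1 ≤ Δ) (hℓ : 1 ≤ ℓ) (hℓk : ℓ ≤ k) :
    binomTail b Δ ℓ ((ℓ + 1) / 2) ≤ (2 * b) ^ k * Δ ^ (k / 2) := by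
  have hterm : ∀ i ∈ Icc ((ℓ + 1) / 2) ℓ,
      ℓ.choose i * b ^ i * Δ ^ (ℓ - i) ≤ ℓ.choose i * (b ^ k * Δ ^ (k / 2)) := by
    intro i hi
    obtain ⟨hi₁, hi₂⟩ := mem_Icc.mp hi
    have hb : b ^ i ≤ b ^ k := by
      rcases b.eq_zero_or_pos with rfl | hb
      · simp [zero_pow (by omega : i ≠ 0)]
      · exact Nat.pow_le_pow_right hb (by omega)
    rw [mul_assoc]
    exact Nat.mul_le_mul_left _ (Nat.mul_le_mul hb (Nat.pow_le_pow_right hΔ (by omega)))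
  calc binomTail b Δ ℓ ((ℓ + 1) / 2)
      ≤ ∑ i ∈ Icc ((ℓ + 1) / 2) ℓ, ℓ.choose i * (b ^ k * Δ ^ (k / 2)) := sum_le_sum hterm
    _ ≤ (∑ i ∈ range (ℓ + 1), ℓ.choose i) * (b ^ k * Δ ^ (k / 2)) := by
      rw [← sum_mul]
      refine Nat.mul_le_mul_right _ (sum_le_sum_of_subset fun i hi => ?_)
      simp only [mem_Icc, mem_range] at hi ⊢
      omega
    _ ≤ 2 ^ k * (b ^ k * Δ ^ (k / 2)) := by
      rw [Nat.sum_range_choose]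
      exact Nat.mul_le_mul_right _ (Nat.pow_le_pow_right two_pos hℓk)
    _ = (2 * b) ^ k * Δ ^ (k / 2) := by ring

theorem sum_binomTail_le {b Δ k : ℕ} (hΔ : 1 ≤ Δ) :
    ∑ ℓ ∈ Icc 1 k, binomTail b Δ ℓ ((ℓ + 1) / 2) ≤ 2 * k * (2 * b) ^ k * Δ ^ (k / 2) := calc
  _ ≤ ∑ ℓ ∈ Icc 1 k, (2 * b) ^ k * Δ ^ (k / 2) := sum_le_sum fun ℓ hℓ =>
      binomTail_half_le hΔ (mem_Icc.mp hℓ).1 (mem_Icc.mp hℓ).2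
  _ = k * ((2 * b) ^ k * Δ ^ (k / 2)) := by
      rw [sum_const, Nat.card_Icc, smul_eq_mul, Nat.add_sub_cancel]
  _ ≤ 2 * k * (2 * b) ^ k * Δ ^ (k / 2) := by
      rw [mul_assoc (2 * k), mul_assoc 2]
      exact Nat.le_mul_of_pos_left _ two_pos

theorem Set.ncard_biUnion_le_ncard_mul {ι α : Type*} {s : Set ι} (hs : s.Finite) {t : ι → Set α}
    {c : ℕ} (h : ∀ i ∈ s, (t i).ncard ≤ c) : (⋃ i ∈ s, t i).ncard ≤ s.ncard * c := by
  lift s to Finset ι using hs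
  calc (⋃ i ∈ (s : Set ι), t i).ncard ≤ ∑ i ∈ s, (t i).ncard := by
        simpa using s.set_ncard_biUnion_le t
    _ ≤ ∑ _i ∈ s, c := sum_le_sum h
    _ = _ := by rw [sum_const, smul_eq_mul, Set.ncard_coe_finset]

section Chains

variable {α : Type*} (R D : α → α → Prop) [DecidableRel D]

def stepCount : α → List α → ℕ
  | _, [] => 0
  | a, u :: l => (if D a u then 1 else 0) + stepCount u l

/-- The chain `a :: l` is recorded by `l` alone, so that prefixing a successor `u` of `a` turns
chains from `u` into chains from `a`. -/
def chainsWithSteps (a : α) (ℓ m : ℕ) : Set (List α) :=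
  {l | l.length = ℓ ∧ (a :: l).IsChain R ∧ m ≤ stepCount D a l}

variable {R D}

theorem chainsWithSteps_finite [Finite α] (a : α) (ℓ m : ℕ) :
    (chainsWithSteps R D a ℓ m).Finite :=
  (List.finite_length_eq α ℓ).subset fun _ hl => hl.1

theorem chainsWithSteps_zero (a : α) : chainsWithSteps R D a 0 0 = {[]} := by
  ext l
  simp +contextual [chainsWithSteps, List.IsChain.singleton]

theorem chainsWithSteps_zero_of_pos (a : α) {m : ℕ} (hm : 0 < m) :
    chainsWithSteps R D a 0 m = ∅ := by
  ext l
  simp +contextual [chainsWithSteps, stepCount, hm.ne']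

theorem chainsWithSteps_succ_subset (a : α) (ℓ m : ℕ) :
    chainsWithSteps R D a (ℓ + 1) m ⊆
      (⋃ u ∈ {u | D a u}, List.cons u '' chainsWithSteps R D u ℓ (m - 1)) ∪
        ⋃ u ∈ {u | R a u}, List.cons u '' chainsWithSteps R D u ℓ m := by
  rintro (_ | ⟨u, l⟩) ⟨hlen, hchain, hm⟩
  · simp at hlen
  rw [List.isChain_cons_cons] at hchain
  have hstep : stepCount D a (u :: l) = (if D a u then 1 else 0) + stepCount D u l := rfl
  by_cases hD : D a u
  · refine Or.inl (Set.mem_biUnion hD ⟨l, ⟨by simpa using hlen, hchain.2, ?_⟩, rfl⟩)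
    simp only [hstep, hD, if_true] at hm
    omega
  · refine Or.inr (Set.mem_biUnion hchain.1 ⟨l, ⟨by simpa using hlen, hchain.2, ?_⟩, rfl⟩)
    simpa [hstep, hD] using hm

theorem ncard_chainsWithSteps_le [Finite α] {b Δ : ℕ} (hD : ∀ a, {u | D a u}.ncard ≤ b)
    (hR : ∀ a, {u | R a u}.ncard ≤ Δ) (ℓ : ℕ) (a : α) (m : ℕ) :
    (chainsWithSteps R D a ℓ m).ncard ≤ binomTail b Δ ℓ m := by
  induction ℓ generalizing a m with
  | zero =>
    rcases m.eq_zero_or_pos with rfl | hm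
    · simp [chainsWithSteps_zero, binomTail_zero_right]
    · simp [chainsWithSteps_zero_of_pos a hm]
  | succ ℓ ih =>
    have hunion (s : Set α) (n : ℕ) :
        (⋃ u ∈ s, List.cons u '' chainsWithSteps R D u ℓ n).ncard ≤ s.ncard * binomTail b Δ ℓ n :=
      Set.ncard_biUnion_le_ncard_mul s.toFinite fun u _ =>
        (Set.ncard_image_of_injective _ List.cons_injective).trans_le (ih u n)
    have hfin (s : Set α) (n : ℕ) : (⋃ u ∈ s, List.cons u '' chainsWithSteps R D u ℓ n).Finite :=
      s.toFinite.biUnion fun u _ => (chainsWithSteps_finite u ℓ n).image _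
    calc (chainsWithSteps R D a (ℓ + 1) m).ncard
        ≤ {u | D a u}.ncard * binomTail b Δ ℓ (m - 1) + {u | R a u}.ncard * binomTail b Δ ℓ m :=
          (Set.ncard_le_ncard (chainsWithSteps_succ_subset a ℓ m)
            ((hfin _ _).union (hfin _ _))).trans <| (Set.ncard_union_le _ _).trans <|
              Nat.add_le_add (hunion _ _) (hunion _ _)
      _ ≤ binomTail b Δ (ℓ + 1) m := by
          rw [binomTail_succ]
          gcongr
          exacts [hD a, hR a]

end Chains

namespace SimpleGraph.Walk

variable {V : Type*} {G : SimpleGraph V} (D : V → V → Prop) [DecidableRel D]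

theorem stepCount_support_tail {u w : V} (p : G.Walk u w) :
    stepCount D u p.support.tail = p.darts.countP (fun d => decide (D d.toProd.1 d.toProd.2)) := by
  induction p with
  | nil => rfl
  | @cons u v w h p ih =>
    rw [support_cons, List.tail_cons, ← p.cons_tail_support, stepCount, ih, darts_cons,
      List.countP_cons, add_comm]
    simp only [decide_eq_true_eq]

theorem support_tail_mem_chainsWithSteps {u w : V} (p : G.Walk u w) {m : ℕ}
    (hm : m ≤ p.darts.countP (fun d => decide (D d.toProd.1 d.toProd.2))) :
    p.support.tail ∈ chainsWithSteps G.Adj D u p.length m := by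
  refine ⟨by simp, p.cons_tail_support ▸ p.isChain_adj_support, ?_⟩
  rwa [stepCount_support_tail]

end SimpleGraph.Walk

theorem charged_pairs_bound_general {V : Type*} [Fintype V] (G : SimpleGraph V)
    (D : V → V → Prop) [DecidableRel D] (b k Δ : ℕ)
    (hΔ : 1 ≤ Δ)
    (hout : ∀ v : V, {w | D v w}.ncard ≤ b)
    (hmax : ∀ v : V, (G.neighborSet v).ncard ≤ Δ)
    (v : V) :
    {w : V | ∃ ℓ, 1 ≤ ℓ ∧ ℓ ≤ k ∧ ∃ p : G.Walk v w, p.IsPath ∧ p.length = ℓ ∧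
        (ℓ + 1) / 2 ≤ p.darts.countP (fun d => decide (D d.toProd.1 d.toProd.2))}.ncard ≤
      ∑ ℓ ∈ Finset.Icc 1 k, ∑ i ∈ Finset.Icc ((ℓ + 1) / 2) ℓ,
        ℓ.choose i * b ^ i * Δ ^ (ℓ - i) ∧
    ∑ ℓ ∈ Finset.Icc 1 k, ∑ i ∈ Finset.Icc ((ℓ + 1) / 2) ℓ,
        ℓ.choose i * b ^ i * Δ ^ (ℓ - i) ≤ 2 * k * (2 * b) ^ k * Δ ^ (k / 2) := by
  refine ⟨?_, sum_binomTail_le hΔ⟩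
  let endpoint (l : List V) : V := (v :: l).getLast (List.cons_ne_nil v l)
  let chains : Set (List V) := ⋃ ℓ ∈ Icc 1 k, chainsWithSteps G.Adj D v ℓ ((ℓ + 1) / 2)
  have hchains : chains.Finite :=
    (Icc 1 k).finite_toSet.biUnion fun ℓ _ => chainsWithSteps_finite v ℓ _
  calc _ ≤ (endpoint '' chains).ncard := Set.ncard_le_ncard ?_ (hchains.image _)
    _ ≤ chains.ncard := Set.ncard_image_le hchains
    _ ≤ ∑ ℓ ∈ Icc 1 k, (chainsWithSteps G.Adj D v ℓ ((ℓ + 1) / 2)).ncard :=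
      (Icc 1 k).set_ncard_biUnion_le _
    _ ≤ _ := sum_le_sum fun ℓ _ => ncard_chainsWithSteps_le hout hmax ℓ v _
  rintro w ⟨ℓ, hℓ₁, hℓk, p, -, rfl, hp⟩
  refine ⟨p.support.tail, Set.mem_biUnion (mem_Icc.mpr ⟨hℓ₁, hℓk⟩)
    (p.support_tail_mem_chainsWithSteps D hp), ?_⟩
  simp only [endpoint, p.cons_tail_support, p.getLast_support]

/-- Suppose the edges of `G` are oriented (via the relation `D`) so that every
vertex has outdegree at most `b`, and `G` has diameter at most `k` and maximum
degree at most `Δ ≥ 1`. Then for every vertex `v`, the number of vertices `w`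
reachable from `v` by a path of length `ℓ` with `1 ≤ ℓ ≤ k` containing at least
`⌈ℓ/2⌉` forward-oriented edges is at most
`∑_{ℓ=1}^{k} ∑_{i=⌈ℓ/2⌉}^{ℓ} C(ℓ,i) b^i Δ^{ℓ−i} ≤ 2k(2b)^k Δ^{⌊k/2⌋}`. -/
theorem charged_pairs_bound {V : Type*} [Fintype V] (G : SimpleGraph V)
    (D : V → V → Prop) [DecidableRel D] (b k Δ : ℕ)
    (hΔ : 1 ≤ Δ) (hk : 1 ≤ k)
    (hor : ∀ v w : V, G.Adj v w → Xor' (D v w) (D w v))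
    (hsub : ∀ v w : V, D v w → G.Adj v w)
    (hout : ∀ v : V, {w | D v w}.ncard ≤ b)
    (hmax : ∀ v : V, (G.neighborSet v).ncard ≤ Δ)
    (hconn : G.Connected)
    (hdiam : ∀ u v : V, G.dist u v ≤ k)
    (v : V) :
    {w : V | ∃ ℓ, 1 ≤ ℓ ∧ ℓ ≤ k ∧ ∃ p : G.Walk v w, p.IsPath ∧ p.length = ℓ ∧
        (ℓ + 1) / 2 ≤ p.darts.countP (fun d => decide (D d.toProd.1 d.toProd.2))}.ncard ≤
      ∑ ℓ ∈ Finset.Icc 1 k, ∑ i ∈ Finset.Icc ((ℓ + 1) / 2) ℓ,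
        ℓ.choose i * b ^ i * Δ ^ (ℓ - i) ∧
    ∑ ℓ ∈ Finset.Icc 1 k, ∑ i ∈ Finset.Icc ((ℓ + 1) / 2) ℓ,
        ℓ.choose i * b ^ i * Δ ^ (ℓ - i) ≤ 2 * k * (2 * b) ^ k * Δ ^ (k / 2) :=
  charged_pairs_bound_general G D b k Δ hΔ hout hmax v
end

section
/- For all integers p ≥ 1, q ≥ 1 and m ≤ (q+1)p, there exists a bipartite graph T with bipartition (C, D) such that |C| = m, every vertex of C has degree q, |D| = C(q+1,2), every vertex of D has degree at most 2p, and every pair of vertices in C has a common neighbour in D. -/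
/-- For all integers `p ≥ 1`, `q ≥ 1` and `m ≤ (q+1)p` there is a bipartite
graph `T` with bipartition `(C, D)` (encoded as a relation between the part `C`
of size `m` and the part `D` of size `C(q+1,2)`), such that every vertex of `C`
has degree `q`, every vertex of `D` has degree at most `2p`, and every pair of
vertices in `C` has a common neighbour in `D`. -/
theorem bipartite_common_neighbour (p q m : ℕ) (hp : 1 ≤ p) (hq : 1 ≤ q)
    (hm : m ≤ (q + 1) * p) :
    ∃ R : Fin m → Fin ((q + 1).choose 2) → Prop,
      (∀ c : Fin m, {d | R c d}.ncard = q) ∧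
      (∀ d : Fin ((q + 1).choose 2), {c | R c d}.ncard ≤ 2 * p) ∧
      (∀ c c' : Fin m, ∃ d, R c d ∧ R c' d) := by
  haveI : Nontrivial (Fin (q + 1)) := Fin.nontrivial_iff_two_le.mpr (by omega)
  have hcard : Fintype.card {s : Finset (Fin (q + 1)) // s.card = 2} = (q + 1).choose 2 := by
    rw [Fintype.card_finset_len, Fintype.card_fin]
  let e : Fin ((q + 1).choose 2) ≃ {s : Finset (Fin (q + 1)) // s.card = 2} :=
    (Fintype.equivFinOfCardEq hcard).symm
  have hcol : ∀ c : Fin m, (c : ℕ) / p < q + 1 := fun c =>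
    (Nat.div_lt_iff_lt_mul hp).mpr (lt_of_lt_of_le c.2 (by omega))
  let col : Fin m → Fin (q + 1) := fun c => ⟨(c : ℕ) / p, hcol c⟩
  -- key structural fact: a 2-set containing a is {a, b} for the unique other element b
  have hsplit : ∀ (s : Finset (Fin (q + 1))), s.card = 2 → ∀ a ∈ s,
      ∃ b, b ≠ a ∧ s = {a, b} := by
    intro s hs a ha
    have h1 : (s.erase a).card = 1 := by
      rw [Finset.card_erase_of_mem ha, hs]
    obtain ⟨b, hb⟩ := Finset.card_eq_one.mp h1
    refine ⟨b, ?_, ?_⟩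
    · have : b ∈ s.erase a := hb ▸ Finset.mem_singleton_self b
      exact Finset.ne_of_mem_erase this
    · rw [← Finset.insert_erase ha, hb]
  refine ⟨fun c d => col c ∈ (e d).1, ?_, ?_, ?_⟩
  · -- degree of c is q
    intro c
    rw [Set.ncard_eq_toFinset_card']
    have ht : {d | col c ∈ (e d).1}.toFinset =
        Finset.univ.filter (fun d => col c ∈ (e d).1) := by
      ext d; simp
    rw [ht]
    have hkey : (Finset.univ.filter (fun b : Fin (q + 1) => b ≠ col c)).card =
        (Finset.univ.filter (fun d => col c ∈ (e d).1)).card := by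
      refine Finset.card_bij
        (fun b hb => e.symm ⟨{col c, b}, Finset.card_pair
          (Ne.symm (Finset.mem_filter.mp hb).2)⟩) ?_ ?_ ?_
      · intro b hb
        simp only [Finset.mem_filter, Finset.mem_univ, true_and]
        rw [Equiv.apply_symm_apply]
        exact Finset.mem_insert_self _ _
      · intro b1 hb1 b2 hb2 h
        have := e.symm.injective h
        have hset : ({col c, b1} : Finset (Fin (q + 1))) = {col c, b2} :=
          congrArg Subtype.val this
        have hb1' : b1 ∈ ({col c, b2} : Finset (Fin (q + 1))) := by
          rw [← hset]; exact Finset.mem_insert_of_mem (Finset.mem_singleton_self b1)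
        rcases Finset.mem_insert.mp hb1' with h' | h'
        · exact absurd h' (Finset.mem_filter.mp hb1).2
        · exact Finset.mem_singleton.mp h'
      · intro d hd
        have hmem : col c ∈ (e d).1 := (Finset.mem_filter.mp hd).2
        obtain ⟨b, hbne, hbeq⟩ := hsplit (e d).1 (e d).2 (col c) hmem
        refine ⟨b, Finset.mem_filter.mpr ⟨Finset.mem_univ _, hbne⟩, ?_⟩
        have heq : e d = ⟨{col c, b}, Finset.card_pair (Ne.symm hbne)⟩ :=
          Subtype.ext hbeq
        show e.symm ⟨{col c, b}, Finset.card_pair (Ne.symm hbne)⟩ = d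
        rw [← heq, Equiv.symm_apply_apply]
    rw [← hkey, Finset.filter_ne', Finset.card_erase_of_mem (Finset.mem_univ _)]
    simp
  · -- degree of d at most 2p
    intro d
    rw [Set.ncard_eq_toFinset_card']
    have ht : {c | col c ∈ (e d).1}.toFinset =
        Finset.univ.filter (fun c => col c ∈ (e d).1) := by
      ext c; simp
    rw [ht]
    have hsub : Finset.univ.filter (fun c => col c ∈ (e d).1) ⊆
        (e d).1.biUnion (fun i => Finset.univ.filter (fun c => col c = i)) := by
      intro c hc
      rw [Finset.mem_biUnion]
      exact ⟨col c, (Finset.mem_filter.mp hc).2, Finset.mem_filter.mpr ⟨Finset.mem_univ _, rfl⟩⟩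
    refine le_trans (Finset.card_le_card hsub) ?_
    refine le_trans (Finset.card_biUnion_le) ?_
    have hbound : ∀ i : Fin (q + 1),
        (Finset.univ.filter (fun c => col c = i)).card ≤ p := by
      intro i
      have : (Finset.univ.filter (fun c => col c = i)).card ≤ (Finset.univ : Finset (Fin p)).card := by
        refine Finset.card_le_card_of_injOn (fun c => ⟨(c : ℕ) % p, Nat.mod_lt _ hp⟩)
          (fun _ _ => Finset.mem_univ _) ?_
        intro c1 h1 c2 h2 hmod
        have e1 : (c1 : ℕ) / p = i := congrArg Fin.val (Finset.mem_filter.mp h1).2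
        have e2 : (c2 : ℕ) / p = i := congrArg Fin.val (Finset.mem_filter.mp h2).2
        have emod : (c1 : ℕ) % p = (c2 : ℕ) % p := congrArg Fin.val hmod
        have : (c1 : ℕ) = (c2 : ℕ) := by
          rw [← Nat.div_add_mod (c1 : ℕ) p, ← Nat.div_add_mod (c2 : ℕ) p, e1, e2, emod]
        exact Fin.ext this
      simpa using this
    calc ∑ i ∈ (e d).1, (Finset.univ.filter (fun c => col c = i)).card
        ≤ ∑ _i ∈ (e d).1, p := Finset.sum_le_sum (fun i _ => hbound i)
      _ = 2 * p := by rw [Finset.sum_const, (e d).2, smul_eq_mul]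
  · -- common neighbour
    intro c c'
    by_cases h : col c = col c'
    · obtain ⟨b, hb⟩ := exists_ne (col c)
      refine ⟨e.symm ⟨{col c, b}, Finset.card_pair hb.symm⟩, ?_, ?_⟩ <;>
        simp [Equiv.apply_symm_apply, ← h]
    · refine ⟨e.symm ⟨{col c, col c'}, Finset.card_pair h⟩, ?_, ?_⟩ <;>
        simp [Equiv.apply_symm_apply]
end

section
/- For all even integers b ≥ 2 and even k ≥ 4, and Δ ≥ b with Δ ≡ 2 (mod 4) or b ≡ 0 (mod 4), there exists a graph with arboricity at most b, maximum degree at most Δ, diameter at most k, and at least (8/b²)·(bΔ/8)^{k/2} vertices. -/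
open SimpleGraph

variable {V W : Type*} {G : SimpleGraph V} {G' : SimpleGraph W}

lemma ArboricityLE.of_iSup_eq {ι : Type*} [Fintype ι] {F : ι → SimpleGraph V}
    (hF : ∀ i, (F i).IsAcyclic) (hG : ⨆ i, F i = G) : ArboricityLE G (Fintype.card ι) :=
  let e := Fintype.equivFin ι
  ⟨F ∘ e.symm, fun _ ↦ hF _, hG ▸ e.symm.iSup_comp⟩

lemma ArboricityLE.of_iso {b : ℕ} (h : ArboricityLE G b) (e : G ≃g G') :
    ArboricityLE G' b := by
  obtain ⟨F, hF, hG⟩ := h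
  refine ⟨fun i ↦ (F i).comap e.symm, fun i ↦ (hF i).of_comap e.symm.toEquiv.toEmbedding, ?_⟩
  ext x y
  simp only [iSup_adj, comap_adj, ← e.symm.map_adj_iff (G := G'), ← hG]

namespace SimpleGraph

lemma Iso.ncard_neighborSet (e : G ≃g G') (v : V) :
    (G'.neighborSet (e v)).ncard = (G.neighborSet v).ncard := by
  rw [← e.image_neighborSet, Set.ncard_image_of_injective _ e.injective]

lemma Iso.dist_apply_le (e : G ≃g G') (hG : G.Connected) (u v : V) :
    G'.dist (e u) (e v) ≤ G.dist u v := by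
  obtain ⟨p, hp⟩ := hG.exists_walk_length_eq_dist u v
  simpa [hp] using dist_le (p.map e.toHom)

lemma isAcyclic_of_forall_adj_mem {S : Set V} (hS : ∀ ⦃u v⦄, G.Adj u v → u ∈ S ∨ v ∈ S)
    (hsub : ∀ s ∈ S, (G.neighborSet s).Subsingleton) : G.IsAcyclic := by
  have not_mem : ∀ w (c : G.Walk w w), c.IsCycle → w ∉ S := fun w c hc hw ↦
    hc.snd_ne_penultimate <|
      hsub w hw (c.adj_snd hc.not_nil) (c.adj_penultimate hc.not_nil).symm
  classical
  intro v c hc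
  rcases hS (c.adj_snd hc.not_nil) with hv | hv
  · exact not_mem v c hc hv
  · exact not_mem _ _ (hc.rotate (c.getVert_mem_support 1)) hv

end SimpleGraph

namespace AltDeBruijn

@[ext]
structure Word (a q n : ℕ) where
  phase : ZMod 2
  letter : Fin (n + 1) → Fin a
  letter_lt : ∀ t : Fin (n + 1), phase + (t : ℕ) = 1 → (letter t : ℕ) < q

variable {a q n : ℕ}

instance : Fintype (Word a q n) :=
  Fintype.ofEquiv
    {w : ZMod 2 × (Fin (n + 1) → Fin a) //
      ∀ t : Fin (n + 1), w.1 + (t : ℕ) = 1 → (w.2 t : ℕ) < q}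
    ⟨fun w ↦ ⟨w.1.1, w.1.2, w.2⟩, fun w ↦ ⟨(w.phase, w.letter), w.letter_lt⟩,
      fun _ ↦ rfl, fun _ ↦ rfl⟩

def IsShift (u v : Word a q n) : Prop :=
  v.phase = u.phase + 1 ∧ Fin.tail u.letter = Fin.init v.letter

variable (a q n) in
def graph : SimpleGraph (Word a q n) where
  Adj u v := IsShift u v ∨ IsShift v u
  symm := ⟨fun _ _ ↦ Or.symm⟩
  loopless := ⟨fun u ↦ by rintro (⟨h, -⟩ | ⟨h, -⟩) <;> simp at h⟩

namespace IsShift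

variable {u v w : Word a q n}

lemma adj (h : IsShift u v) : (graph a q n).Adj u v := Or.inl h

lemma eq_of_letter_last (hv : IsShift u v) (hw : IsShift u w)
    (h : v.letter (Fin.last n) = w.letter (Fin.last n)) : v = w := by
  ext1
  · rw [hv.1, hw.1]
  · rw [← Fin.snoc_init_self v.letter, ← Fin.snoc_init_self w.letter, ← hv.2, ← hw.2, h]

lemma eq_of_letter_zero (hv : IsShift v u) (hw : IsShift w u)
    (h : v.letter 0 = w.letter 0) : v = w := by
  ext1
  · exact add_right_cancel (hv.1.symm.trans hw.1)
  · rw [← Fin.cons_self_tail v.letter, ← Fin.cons_self_tail w.letter, hv.2, hw.2, h]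

end IsShift

lemma ncard_setOf_isShift_from_le (u : Word a q n) : {v | IsShift u v}.ncard ≤ a :=
  calc {v | IsShift u v}.ncard ≤ (Set.univ : Set (Fin a)).ncard :=
        Set.ncard_le_ncard_of_injOn _ (fun _ _ ↦ Set.mem_univ _)
          (fun _ hv _ hw ↦ hv.eq_of_letter_last hw) Set.finite_univ
    _ = a := by simp

lemma ncard_setOf_isShift_to_le (u : Word a q n) : {v | IsShift v u}.ncard ≤ a :=
  calc {v | IsShift v u}.ncard ≤ (Set.univ : Set (Fin a)).ncard :=
        Set.ncard_le_ncard_of_injOn _ (fun _ _ ↦ Set.mem_univ _)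
          (fun _ hv _ hw ↦ hv.eq_of_letter_zero hw) Set.finite_univ
    _ = a := by simp

lemma ncard_neighborSet_le (u : Word a q n) : ((graph a q n).neighborSet u).ncard ≤ 2 * a :=
  calc ((graph a q n).neighborSet u).ncard ≤ ({v | IsShift u v} ∪ {v | IsShift v u}).ncard :=
        Set.ncard_le_ncard (fun _ ↦ id) (Set.toFinite _)
    _ ≤ a + a := (Set.ncard_union_le _ _).trans
        (add_le_add (ncard_setOf_isShift_from_le u) (ncard_setOf_isShift_to_le u))
    _ = 2 * a := (two_mul a).symm

def outForest (c : Fin q) : SimpleGraph (Word a q n) :=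
  fromRel fun u v ↦ IsShift u v ∧ u.phase = 0 ∧ (v.letter (Fin.last n) : ℕ) = c

def inForest (c : Fin q) : SimpleGraph (Word a q n) :=
  fromRel fun u v ↦ IsShift u v ∧ u.phase = 1 ∧ (u.letter 0 : ℕ) = c

variable (a q n) in
def forest : Fin q ⊕ Fin q → SimpleGraph (Word a q n) := Sum.elim outForest inForest

lemma outForest_isAcyclic (c : Fin q) : (outForest c : SimpleGraph (Word a q n)).IsAcyclic := by
  refine isAcyclic_of_forall_adj_mem (S := {w | w.phase = 0}) ?_ fun s hs v hv w hw ↦ ?_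
  · rintro u v ⟨-, ⟨-, hu, -⟩ | ⟨-, hv, -⟩⟩
    exacts [Or.inl hu, Or.inr hv]
  · have out : ∀ {x}, (outForest c).Adj s x →
        IsShift s x ∧ (x.letter (Fin.last n) : ℕ) = c := by
      rintro x (⟨-, ⟨h, -, hx⟩ | ⟨h, hx, -⟩⟩)
      · exact ⟨h, hx⟩
      · have hs : s.phase = 0 := hs
        simp [h.1, hx] at hs
    exact (out hv).1.eq_of_letter_last (out hw).1 (Fin.ext ((out hv).2.trans (out hw).2.symm))

lemma inForest_isAcyclic (c : Fin q) : (inForest c : SimpleGraph (Word a q n)).IsAcyclic := by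
  refine isAcyclic_of_forall_adj_mem (S := {w | w.phase = 0}) ?_ fun s hs v hv w hw ↦ ?_
  · rintro u v ⟨-, ⟨h, hu, -⟩ | ⟨h, hv, -⟩⟩
    · exact Or.inr (show v.phase = 0 by rw [h.1, hu]; rfl)
    · exact Or.inl (show u.phase = 0 by rw [h.1, hv]; rfl)
  · have inn : ∀ {x}, (inForest c).Adj s x → IsShift x s ∧ (x.letter 0 : ℕ) = c := by
      rintro x (⟨-, ⟨h, hx, -⟩ | ⟨h, -, hx⟩⟩)
      · have hs : s.phase = 0 := hs
        simp [hs] at hx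
      · exact ⟨h, hx⟩
    exact (inn hv).1.eq_of_letter_zero (inn hw).1 (Fin.ext ((inn hv).2.trans (inn hw).2.symm))

lemma forest_isAcyclic : ∀ i, (forest a q n i).IsAcyclic :=
  Sum.forall.mpr ⟨outForest_isAcyclic, inForest_isAcyclic⟩

lemma forest_le_graph (i : Fin q ⊕ Fin q) : forest a q n i ≤ graph a q n := by
  intro u v h
  rcases i with c | c <;> obtain ⟨-, ⟨h, -⟩ | ⟨h, -⟩⟩ := h
  exacts [Or.inl h, Or.inr h, Or.inl h, Or.inr h]

/-- Since `n` is even, a shift out of phase `0` appends a letter of `Fin q`, and a shift out of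
phase `1` drops one. -/
lemma exists_forest_adj (hn : Even n) {u v : Word a q n} (h : IsShift u v) :
    ∃ i, (forest a q n i).Adj u v := by
  have hne : u ≠ v := h.adj.ne
  rcases (by decide : ∀ p : ZMod 2, p = 0 ∨ p = 1) u.phase with hu | hu
  · have hlt : (v.letter (Fin.last n) : ℕ) < q :=
      v.letter_lt _ (by simp [h.1, hu, hn.natCast_zmod_two])
    exact ⟨.inl ⟨_, hlt⟩, hne, Or.inl ⟨h, hu, rfl⟩⟩
  · have hlt : (u.letter 0 : ℕ) < q := u.letter_lt _ (by simp [hu])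
    exact ⟨.inr ⟨_, hlt⟩, hne, Or.inl ⟨h, hu, rfl⟩⟩

lemma iSup_forest (hn : Even n) : ⨆ i, forest a q n i = graph a q n := by
  refine le_antisymm (iSup_le forest_le_graph) fun u v h ↦ iSup_adj.mpr ?_
  rcases h with h | h
  · exact exists_forest_adj hn h
  · obtain ⟨i, hi⟩ := exists_forest_adj hn h
    exact ⟨i, hi.symm⟩

lemma arboricityLE_graph (hn : Even n) : ArboricityLE (graph a q n) (2 * q) := by
  simpa [two_mul] using ArboricityLE.of_iSup_eq forest_isAcyclic (iSup_forest hn)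

def Word.prepend (v : Word a q n) (c : Fin a) (hc : v.phase = 0 → (c : ℕ) < q) :
    Word a q n where
  phase := v.phase + 1
  letter := Fin.cons c (Fin.init v.letter)
  letter_lt t := by
    refine Fin.cases (fun h ↦ hc ?_) (fun s h ↦ v.letter_lt s.castSucc ?_) t
    · simpa using h
    · have two : (2 : ZMod 2) = 0 := rfl
      simp only [Fin.val_succ, Fin.val_castSucc, Nat.cast_add, Nat.cast_one] at h ⊢
      linear_combination h - two

lemma isShift_prepend (v : Word a q n) (c : Fin a) (hc : v.phase = 0 → (c : ℕ) < q) :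
    IsShift (v.prepend c hc) v :=
  ⟨by simp [Word.prepend, add_assoc, CharTwo.add_self_eq_zero], by simp [Word.prepend]⟩

lemma exists_walk_of_letter_eq (u : Word a q n) (j : ℕ) (hj : j ≤ n + 1) (v : Word a q n)
    (hphase : v.phase = u.phase + j)
    (hletter : ∀ s t : Fin (n + 1), (t : ℕ) + j = s → v.letter t = u.letter s) :
    ∃ p : (graph a q n).Walk u v, p.length ≤ j := by
  have two : (2 : ZMod 2) = 0 := rfl
  induction j generalizing v with
  | zero =>
    obtain rfl : u = v := Word.ext (by simpa using hphase.symm)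
      (funext fun t ↦ (hletter t t (by simp)).symm)
    exact ⟨.nil, le_rfl⟩
  | succ j ih =>
    push_cast at hphase
    let w := v.prepend (u.letter ⟨j, by omega⟩)
      fun h0 ↦ u.letter_lt _ (by linear_combination h0 - hphase - two)
    obtain ⟨p, hp⟩ := ih (by omega) w
      (by simp only [w, Word.prepend]; linear_combination hphase + two)
      fun s t hst ↦ by
        induction t using Fin.cases with
        | zero =>
          have hs : s = ⟨j, by omega⟩ := Fin.ext (by simpa using hst.symm)
          simp [w, Word.prepend, hs]
        | succ r =>
          simp only [Fin.val_succ] at hst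
          simpa [w, Word.prepend, Fin.init] using
            hletter s r.castSucc (by simp only [Fin.val_castSucc]; omega)
    exact ⟨p.concat (isShift_prepend ..).adj, by simp; omega⟩

lemma exists_walk_length_le (hn : Even n) (ha : 0 < a) (hq : 0 < q) (u v : Word a q n) :
    ∃ p : (graph a q n).Walk u v, p.length ≤ n + 2 := by
  have across : ∀ w : Word a q n, w.phase = u.phase + 1 →
      ∃ p : (graph a q n).Walk u w, p.length ≤ n + 1 := fun w hw ↦
    exists_walk_of_letter_eq u (n + 1) le_rfl w (by simp [hw, hn.natCast_zmod_two])
      fun s t hst ↦ absurd hst (by omega)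
  rcases (by decide : ∀ x y : ZMod 2, x = y + 1 ∨ x = y) v.phase u.phase with h | h
  · obtain ⟨p, hp⟩ := across v h
    exact ⟨p, by omega⟩
  · let w := v.prepend ⟨0, ha⟩ fun _ ↦ hq
    obtain ⟨p, hp⟩ := across w (by simp [w, Word.prepend, h])
    exact ⟨p.concat (isShift_prepend ..).adj, by simp; omega⟩

lemma graph_connected (hn : Even n) (ha : 0 < a) (hq : 0 < q) : (graph a q n).Connected :=
  have : Nonempty (Word a q n) := ⟨⟨0, fun _ ↦ ⟨0, ha⟩, fun _ _ ↦ hq⟩⟩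
  ⟨fun u v ↦ (exists_walk_length_le hn ha hq u v).elim fun p _ ↦ p.reachable⟩

lemma graph_dist_le (hn : Even n) (ha : 0 < a) (hq : 0 < q) (u v : Word a q n) :
    (graph a q n).dist u v ≤ n + 2 :=
  (exists_walk_length_le hn ha hq u v).elim fun p hp ↦ (SimpleGraph.dist_le p).trans hp

lemma prod_range_alternating (m : ℕ) :
    ∏ i ∈ Finset.range (2 * m + 1), (if (i : ZMod 2) = 1 then q else a) =
      a ^ (m + 1) * q ^ m := by
  induction m with
  | zero => simp
  | succ m ih =>
    have hodd : ((2 * m + 1 : ℕ) : ZMod 2) = 1 := Odd.natCast_zmod_two ⟨m, rfl⟩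
    have heven : ((2 * m + 2 : ℕ) : ZMod 2) = 0 := Even.natCast_zmod_two ⟨m + 1, by ring⟩
    rw [show 2 * (m + 1) + 1 = 2 * m + 1 + 1 + 1 by ring, Finset.prod_range_succ,
      Finset.prod_range_succ, ih, hodd, heven]
    simp only [if_pos, zero_ne_one, if_false]
    ring

lemma card_subtype_imp_lt (hqa : q ≤ a) (P : Prop) [Decidable P] :
    Fintype.card {c : Fin a // P → (c : ℕ) < q} = if P then q else a := by
  by_cases hP : P <;> simp [hP, Fintype.card_fin_lt_of_le hqa]

lemma pow_mul_pow_le_card (hqa : q ≤ a) (m : ℕ) :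
    a ^ (m + 1) * q ^ m ≤ Fintype.card (Word a q (2 * m)) := by
  let f : ((t : Fin (2 * m + 1)) → {c : Fin a // ((t : ℕ) : ZMod 2) = 1 → (c : ℕ) < q}) →
      Word a q (2 * m) := fun g ↦ ⟨0, fun t ↦ g t, fun t ht ↦ (g t).2 (by simpa using ht)⟩
  have hf : f.Injective := fun g g' h ↦
    funext fun t ↦ Subtype.ext (congrFun (congrArg Word.letter h) t)
  calc a ^ (m + 1) * q ^ m
      = ∏ t : Fin (2 * m + 1), (if ((t : ℕ) : ZMod 2) = 1 then q else a) := by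
        rw [Fin.prod_univ_eq_prod_range (fun i ↦ if (i : ZMod 2) = 1 then q else a),
          prod_range_alternating]
    _ = Fintype.card
          ((t : Fin (2 * m + 1)) → {c : Fin a // ((t : ℕ) : ZMod 2) = 1 → (c : ℕ) < q}) := by
        simp only [Fintype.card_pi, card_subtype_imp_lt hqa]
    _ ≤ Fintype.card (Word a q (2 * m)) := Fintype.card_le_of_injective f hf

end AltDeBruijn

lemma bound_le_pow_mul_pow {b q Δ : ℕ} (m : ℕ) (hbq : b = 2 * q) (hq : 1 ≤ q) (hΔ : 2 ≤ Δ)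
    (hmod : Δ % 4 = 2 ∨ b % 4 = 0) :
    8 / (b : ℚ) ^ 2 * ((b * Δ : ℚ) / 8) ^ (m + 1) ≤
      ((Δ / 2 : ℕ) : ℚ) ^ (m + 1) * q ^ m := by
  subst hbq
  set a : ℕ := Δ / 2
  have hq0 : (0 : ℚ) < q := by exact_mod_cast hq
  have key : 2 * ((Δ : ℚ) / 4) ^ (m + 1) ≤ q * (a : ℚ) ^ (m + 1) := by
    rcases hmod with hΔ4 | hq2
    · have ha : (a : ℚ) = 2 * (Δ / 4) := by
        rw [show (Δ : ℚ) = (2 * a : ℕ) by congr 1; omega]; push_cast; ring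
      have h2 : (2 : ℚ) ≤ 2 ^ (m + 1) := le_self_pow₀ one_le_two (by omega)
      calc 2 * ((Δ : ℚ) / 4) ^ (m + 1)
          ≤ 2 ^ (m + 1) * ((Δ : ℚ) / 4) ^ (m + 1) := by gcongr
        _ = 1 * (a : ℚ) ^ (m + 1) := by rw [ha, mul_pow, one_mul]
        _ ≤ q * (a : ℚ) ^ (m + 1) := by gcongr; exact_mod_cast hq
    · have hq2 : (2 : ℚ) ≤ q := by exact_mod_cast (by omega : 2 ≤ q)
      have ha : (Δ : ℚ) / 4 ≤ a := by
        rw [div_le_iff₀ (by norm_num)]; exact_mod_cast (by omega : Δ ≤ a * 4)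
      gcongr
  calc 8 / ((2 * q : ℕ) : ℚ) ^ 2 * (((2 * q : ℕ) : ℚ) * Δ / 8) ^ (m + 1)
      = 2 * ((Δ : ℚ) / 4) ^ (m + 1) * q ^ m / q := by
        push_cast; field_simp; ring
    _ ≤ q * (a : ℚ) ^ (m + 1) * q ^ m / q := by gcongr
    _ = (a : ℚ) ^ (m + 1) * q ^ m := by field_simp

/-- For all even integers `b ≥ 2` and even `k ≥ 4`, and `Δ ≥ b` with
`Δ ≡ 2 (mod 4)` or `b ≡ 0 (mod 4)`, there exists a graph with arboricity at
most `b`, maximum degree at most `Δ`, diameter at most `k`, and at least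
`(8/b²)·(bΔ/8)^{k/2}` vertices. -/
theorem arboricity_lower_bound (b k Δ : ℕ) (hb : 2 ≤ b) (hbe : Even b)
    (hk : 4 ≤ k) (hke : Even k) (hΔ : b ≤ Δ) (hmod : Δ % 4 = 2 ∨ b % 4 = 0) :
    ∃ (n : ℕ) (G : SimpleGraph (Fin n)),
      ArboricityLE G b ∧
      (∀ v, (G.neighborSet v).ncard ≤ Δ) ∧
      G.Connected ∧
      (∀ u v, G.dist u v ≤ k) ∧
      (8 / (b : ℚ) ^ 2) * ((b * Δ : ℚ) / 8) ^ (k / 2) ≤ n := by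
  obtain ⟨q, rfl⟩ : ∃ q, b = 2 * q := ⟨b / 2, by rcases hbe with ⟨r, hr⟩; omega⟩
  obtain ⟨m, rfl⟩ : ∃ m, k = 2 * m + 2 := ⟨k / 2 - 1, by rcases hke with ⟨r, hr⟩; omega⟩
  have hn : Even (2 * m) := even_two_mul m
  have ha : 0 < Δ / 2 := by omega
  have hq : 0 < q := by omega
  let e := (AltDeBruijn.graph (Δ / 2) q (2 * m)).overFinIso rfl
  refine ⟨_, _, (AltDeBruijn.arboricityLE_graph hn).of_iso e, fun v ↦ ?_,
    e.connected_iff.mp (AltDeBruijn.graph_connected hn ha hq), fun u v ↦ ?_, ?_⟩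
  · rw [← e.apply_symm_apply v, e.ncard_neighborSet]
    exact (AltDeBruijn.ncard_neighborSet_le _).trans (by omega)
  · rw [← e.apply_symm_apply u, ← e.apply_symm_apply v]
    exact (e.dist_apply_le (AltDeBruijn.graph_connected hn ha hq) _ _).trans
      (AltDeBruijn.graph_dist_le hn ha hq _ _)
  · rw [show (2 * m + 2) / 2 = m + 1 by omega]
    calc _ ≤ ((Δ / 2 : ℕ) : ℚ) ^ (m + 1) * q ^ m :=
          bound_le_pow_mul_pow m rfl hq (by omega) hmod
      _ ≤ _ := by exact_mod_cast AltDeBruijn.pow_mul_pow_le_card (by omega) m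
end

section
/- For all integers k ≥ 1, t ≥ 2, and Δ ≥ 2t−2 with k odd, there exists a graph with maximum degree Δ, diameter k, treewidth at most t, and at least (1/2)(t+1)(Δ−1)^{(k−1)/2} vertices. -/
/-- A graph is chordal if every cycle of length at least 4 has a chord, i.e.
an edge of the graph joining two vertices of the cycle that is not an edge of
the cycle. (Equivalently, every induced cycle is a triangle.) -/
def IsChordal {V : Type*} (H : SimpleGraph V) : Prop :=
  ∀ (v : V) (c : H.Walk v v), c.IsCycle → 4 ≤ c.length →
    ∃ x y, x ∈ c.support ∧ y ∈ c.support ∧ H.Adj x y ∧ s(x, y) ∉ c.edges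

/-- `G` has treewidth at most `t`: `G` is a spanning subgraph of a chordal graph
with no clique on `t + 2` vertices. -/
def TreewidthLE {V : Type*} (G : SimpleGraph V) (t : ℕ) : Prop :=
  ∃ H : SimpleGraph V, G ≤ H ∧ IsChordal H ∧ H.CliqueFree (t + 2)

/-! Hang from each vertex of a clique `K_{t+1}` a tree of depth `m = (k - 1) / 2` whose root has
`Δ - t` children and whose other internal vertices have `Δ - 1` children each. All degrees are at
most `Δ`, and any two vertices are joined through their roots by a walk of length at most
`2m + 1`. The graph is chordal with clique number `t + 1`: a cycle cannot leave the clique, since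
its deepest vertex would have its parent as both cycle neighbours, and a triangle cannot change
depth by one along all three of its edges. As `Δ - 2 ≤ 2(Δ - t)`, each tree has at least
`(Δ - 1)^m / 2` vertices. -/

section

open SimpleGraph

variable {V W : Type*}

theorem IsChordal.of_embedding {G : SimpleGraph V} {H : SimpleGraph W} (f : G ↪g H)
    (hH : IsChordal H) : IsChordal G := by
  intro v c hc hlen
  obtain ⟨x, y, hx, hy, hxy, hnot⟩ := hH _ (c.map f.toHom)
    ((Walk.isCycle_map_iff_of_injective f.injective).mpr hc) (by simpa using hlen)
  simp only [Walk.support_map, List.mem_map] at hx hy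
  obtain ⟨x, hx, rfl⟩ := hx
  obtain ⟨y, hy, rfl⟩ := hy
  refine ⟨x, y, hx, hy, f.map_adj_iff.mp hxy, fun hmem => hnot ?_⟩
  rw [Walk.edges_map]
  exact List.mem_map_of_mem (f := Sym2.map f.toHom) hmem

theorem TreewidthLE.map {G : SimpleGraph V} {t : ℕ} (e : V ≃ W) (h : TreewidthLE G t) :
    TreewidthLE (G.map e.toEmbedding) t := by
  obtain ⟨H, hGH, hH, hfree⟩ := h
  exact ⟨H.map e.toEmbedding, map_monotone _ hGH,
    IsChordal.of_embedding (Iso.map e H).symm.toEmbedding hH,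
    hfree.comap (Iso.map e H).isContained'⟩

end

namespace SimpleGraph

variable {V : Type*}

theorem Walk.IsCycle.exists_chord_of_isClique {G : SimpleGraph V} {u : V} {c : G.Walk u u}
    (hc : c.IsCycle) (hlen : 4 ≤ c.length) (hclique : G.IsClique {v | v ∈ c.support}) :
    ∃ x y, x ∈ c.support ∧ y ∈ c.support ∧ G.Adj x y ∧ s(x, y) ∉ c.edges := by
  have hne : u ≠ c.getVert 2 := fun h => by
    have := (hc.getVert_endpoint_iff (i := 2) (by omega)).mp h.symm
    omega
  refine ⟨u, c.getVert 2, c.start_mem_support, c.getVert_mem_support 2,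
    hclique c.start_mem_support (c.getVert_mem_support 2) hne, fun hmem => ?_⟩
  have hedges : c.edges = s(u, c.snd) :: c.tail.edges := by
    rw [← Walk.edges_cons (c.adj_snd hc.not_nil), c.cons_tail_eq hc.not_nil]
  rw [hedges, List.mem_cons] at hmem
  rcases hmem with h | h
  · have h12 : c.getVert 2 = c.getVert 1 := by
      rcases Sym2.eq_iff.mp h with ⟨-, h⟩ | ⟨-, h⟩
      · exact h
      · exact absurd h.symm hne
    have := hc.getVert_injOn (by simp; omega) (by simp; omega) h12
    omega
  · have h2 := hc.isPath_tail.eq_penultimate_of_mem_edges h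
    rw [Walk.penultimate, Walk.getVert_tail, Walk.length_tail] at h2
    have := hc.getVert_injOn (by simp; omega) (by simp; omega) h2
    omega

def hangingForest (d : V → ℕ) (p : V → V) : SimpleGraph V :=
  fromRel fun u v => (d u = 0 ∧ d v = 0) ∨ (d u ≠ 0 ∧ v = p u)

namespace hangingForest

variable {d : V → ℕ} {p : V → V} {u v : V}

theorem adj_of_depth_eq_zero (hu : d u = 0) (hv : d v = 0) (huv : u ≠ v) :
    (hangingForest d p).Adj u v :=
  (fromRel_adj _ _ _).mpr ⟨huv, .inl (.inl ⟨hu, hv⟩)⟩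

theorem adj_parent (hp : ∀ v, d v ≠ 0 → d (p v) + 1 = d v) (hv : d v ≠ 0) :
    (hangingForest d p).Adj v (p v) := by
  refine (fromRel_adj _ _ _).mpr ⟨fun h => ?_, .inl (.inr ⟨hv, rfl⟩)⟩
  have := hp v hv
  rw [← h] at this
  omega

theorem depth_eq_of_adj (hp : ∀ v, d v ≠ 0 → d (p v) + 1 = d v)
    (h : (hangingForest d p).Adj u v) :
    (d u = 0 ∧ d v = 0) ∨ d u = d v + 1 ∨ d v = d u + 1 := by
  rcases ((fromRel_adj _ _ _).mp h).2 with (huv | ⟨hu, rfl⟩) | (hvu | ⟨hv, rfl⟩)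
  · exact .inl huv
  · exact .inr (.inl (hp u hu).symm)
  · exact .inl hvu.symm
  · exact .inr (.inr (hp v hv).symm)

theorem eq_parent_of_adj (hp : ∀ v, d v ≠ 0 → d (p v) + 1 = d v)
    (h : (hangingForest d p).Adj u v) (hvu : d v ≤ d u) (hu : d u ≠ 0) : v = p u := by
  rcases ((fromRel_adj _ _ _).mp h).2 with (huv | ⟨-, rfl⟩) | (hvu' | ⟨hv, rfl⟩)
  · exact absurd huv.1 hu
  · rfl
  · exact absurd hvu'.2 hu
  · have := hp v hv
    omega

/-- On a cycle, a vertex of maximal depth would have its two cycle neighbours both equal to its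
parent. -/
theorem depth_eq_zero_of_isCycle (hp : ∀ v, d v ≠ 0 → d (p v) + 1 = d v)
    {c : (hangingForest d p).Walk u u} (hc : c.IsCycle) : ∀ v ∈ c.support, d v = 0 := by
  classical
  obtain ⟨w, hw, hmax⟩ := c.support.toFinset.exists_max_image d ⟨u, by simp⟩
  simp only [List.mem_toFinset] at hw hmax
  suffices d w = 0 from fun v hv => Nat.eq_zero_of_le_zero (this ▸ hmax v hv)
  by_contra hw0
  have hc' := hc.rotate hw
  have hle : ∀ x ∈ (c.rotate w hw).support, d x ≤ d w :=
    fun x hx => hmax x ((c.mem_support_rotate_iff w hw).mp hx)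
  have h₁ := eq_parent_of_adj hp ((c.rotate w hw).adj_snd hc'.not_nil)
    (hle _ (Walk.getVert_mem_support _ _)) hw0
  have h₂ := eq_parent_of_adj hp ((c.rotate w hw).adj_penultimate hc'.not_nil).symm
    (hle _ (Walk.getVert_mem_support _ _)) hw0
  exact hc'.snd_ne_penultimate (h₁.trans h₂.symm)

theorem isChordal (hp : ∀ v, d v ≠ 0 → d (p v) + 1 = d v) : IsChordal (hangingForest d p) :=
  fun _ _ hc hlen => hc.exists_chord_of_isClique hlen fun _ hx _ hy hxy =>
    adj_of_depth_eq_zero (depth_eq_zero_of_isCycle hp hc _ hx)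
      (depth_eq_zero_of_isCycle hp hc _ hy) hxy

theorem depth_eq_zero_of_adj_of_adj (hp : ∀ v, d v ≠ 0 → d (p v) + 1 = d v) {a b : V}
    (ha : (hangingForest d p).Adj u a) (hb : (hangingForest d p).Adj u b)
    (hab : (hangingForest d p).Adj a b) : d u = 0 := by
  by_contra hu
  have := depth_eq_of_adj hp ha
  have := depth_eq_of_adj hp hb
  have := depth_eq_of_adj hp hab
  -- the depth cannot change by one along all three edges of a triangle
  obtain ⟨hau, hbu⟩ : d a < d u ∧ d b < d u := by omega
  exact hab.ne ((eq_parent_of_adj hp ha hau.le hu).trans (eq_parent_of_adj hp hb hbu.le hu).symm)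

theorem cliqueFree (hp : ∀ v, d v ≠ 0 → d (p v) + 1 = d v) {α : Type*} [Fintype α] {f : V → α}
    (hf : Set.InjOn f {v | d v = 0}) {n : ℕ} (hn : 3 ≤ n) (hα : Fintype.card α < n) :
    (hangingForest d p).CliqueFree n := by
  classical
  intro s hs
  have hroots : ∀ v ∈ s, d v = 0 := by
    intro v hv
    obtain ⟨a, ha, b, hb, hab⟩ := Finset.one_lt_card.mp
      (show 1 < (s.erase v).card by rw [Finset.card_erase_of_mem hv, hs.card_eq]; omega)
    obtain ⟨hav, ha⟩ := Finset.mem_erase.mp ha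
    obtain ⟨hbv, hb⟩ := Finset.mem_erase.mp hb
    exact depth_eq_zero_of_adj_of_adj hp (hs.1 hv ha hav.symm) (hs.1 hv hb hbv.symm)
      (hs.1 ha hb hab)
  have := Finset.card_le_card_of_injOn f (fun _ _ => Finset.mem_coe.mpr (Finset.mem_univ _))
    (hf.mono hroots)
  rw [hs.card_eq, Finset.card_univ] at this
  omega

theorem exists_walk_to_root (hp : ∀ v, d v ≠ 0 → d (p v) + 1 = d v) (v : V) :
    ∃ ρ, d ρ = 0 ∧ ∃ q : (hangingForest d p).Walk v ρ, q.length = d v := by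
  induction hv : d v generalizing v with
  | zero => exact ⟨v, hv, .nil, rfl⟩
  | succ n ih =>
    obtain ⟨ρ, hρ, q, hq⟩ := ih (p v) (by have := hp v (by omega); omega)
    exact ⟨ρ, hρ, .cons (adj_parent hp (by omega)) q, by rw [Walk.length_cons, hq]⟩

theorem exists_walk_length_le (hp : ∀ v, d v ≠ 0 → d (p v) + 1 = d v) (u v : V) :
    ∃ q : (hangingForest d p).Walk u v, q.length ≤ d u + d v + 1 := by
  obtain ⟨ρ, hρ, q, hq⟩ := exists_walk_to_root hp u
  obtain ⟨σ, hσ, q', hq'⟩ := exists_walk_to_root hp v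
  by_cases hρσ : ρ = σ
  · subst hρσ
    exact ⟨q.append q'.reverse, by simp only [Walk.length_append, Walk.length_reverse]; omega⟩
  · refine ⟨q.append (.cons (adj_of_depth_eq_zero hρ hσ hρσ) q'.reverse), ?_⟩
    simp only [Walk.length_append, Walk.length_cons, Walk.length_reverse]
    omega

theorem connected [Nonempty V] (hp : ∀ v, d v ≠ 0 → d (p v) + 1 = d v) :
    (hangingForest d p).Connected :=
  (connected_iff _).mpr ⟨fun u v => (exists_walk_length_le hp u v).elim fun q _ => ⟨q⟩, ‹_›⟩

theorem neighborSet_subset_of_depth_eq_zero (hv : d v = 0) :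
    (hangingForest d p).neighborSet v ⊆ {w | d w = 0 ∧ w ≠ v} ∪ {w | d w ≠ 0 ∧ p w = v} := by
  intro w (hw : (hangingForest d p).Adj v w)
  rcases ((fromRel_adj _ _ _).mp hw) with ⟨hvw, (h | ⟨hv', -⟩) | (h | ⟨hw', rfl⟩)⟩
  · exact .inl ⟨h.2, hvw.symm⟩
  · exact absurd hv hv'
  · exact .inl ⟨h.1, hvw.symm⟩
  · exact .inr ⟨hw', rfl⟩

theorem neighborSet_subset_of_depth_ne_zero (hv : d v ≠ 0) :
    (hangingForest d p).neighborSet v ⊆ insert (p v) {w | d w ≠ 0 ∧ p w = v} := by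
  intro w (hw : (hangingForest d p).Adj v w)
  rcases ((fromRel_adj _ _ _).mp hw) with ⟨-, (h | ⟨-, rfl⟩) | (h | ⟨hw', rfl⟩)⟩
  · exact absurd h.1 hv
  · exact .inl rfl
  · exact absurd h.2 hv
  · exact .inr ⟨hw', rfl⟩

end hangingForest

end SimpleGraph

theorem Nat.pow_le_two_mul_one_add_mul_geom_sum {r D : ℕ} (hD : D ≤ 2 * r + 1) (m : ℕ) :
    D ^ m ≤ 2 * (1 + r * ∑ i ∈ Finset.range m, D ^ i) := by
  rcases D with _ | x
  · rcases m with _ | m <;> simp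
  · calc (x + 1) ^ m = (∑ i ∈ Finset.range m, (x + 1) ^ i) * x + 1 := (geom_sum_mul_add x m).symm
      _ ≤ (∑ i ∈ Finset.range m, (x + 1) ^ i) * (2 * r) + 1 := by gcongr; omega
      _ ≤ 2 * (1 + r * ∑ i ∈ Finset.range m, (x + 1) ^ i) := by linarith

/-- Vertices of a rooted tree of depth at most `m` whose root has `r` children and whose other
internal vertices have `D` children each: the path from the root, latest step first. -/
abbrev TreeAddr (m r D : ℕ) : Type :=
  {l : List (Fin D) // l.length ≤ m ∧ ∀ a ∈ l.getLast?, (a : ℕ) < r}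

namespace TreeAddr

variable {m r D : ℕ}

def tail (l : TreeAddr m r D) : TreeAddr m r D :=
  ⟨l.1.tail, by rw [List.length_tail]; exact (Nat.sub_le _ _).trans l.2.1, by
    rw [List.getLast?_tail]
    split
    · simp
    · exact l.2.2⟩

instance : Finite (TreeAddr m r D) :=
  have := (List.finite_length_le (Fin D) m).to_subtype
  Finite.of_injective (β := {l : List (Fin D) | l.length ≤ m}) (fun l => ⟨l.1, l.2.1⟩)
    fun _ _ h => Subtype.ext (congrArg Subtype.val h :)

theorem one_add_mul_geom_sum_le_card (hrD : r ≤ D) :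
    1 + r * ∑ i ∈ Finset.range m, D ^ i ≤ Nat.card (TreeAddr m r D) := by
  let f : Option (Fin r × Σ j : Fin m, (Fin j → Fin D)) → TreeAddr m r D
    | none => ⟨[], Nat.zero_le m, by simp⟩
    | some (a, ⟨j, g⟩) => ⟨List.ofFn g ++ [Fin.castLE hrD a], by simp, by simp⟩
  have hf : Function.Injective f := by
    rintro (_ | ⟨a, j, g⟩) (_ | ⟨b, j', g'⟩) h <;> simp only [f, Subtype.mk.injEq] at h
    · rfl
    · simp at h
    · simp at h
    · obtain ⟨hg, hab⟩ := List.append_inj' h rfl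
      obtain ⟨hj, hg⟩ := Sigma.mk.inj_iff.mp (List.ofFn_inj'.mp hg)
      obtain rfl := Fin.ext hj
      rw [eq_of_heq hg, Fin.castLE_inj.mp (List.singleton_inj.mp hab)]
  have := Nat.card_le_card_of_injective f hf
  simpa [Nat.card_eq_fintype_card, Fintype.card_sigma, Fin.sum_univ_eq_sum_range, add_comm]
    using this

theorem pow_le_two_mul_card (hrD : r ≤ D) (hD : D ≤ 2 * r + 1) :
    D ^ m ≤ 2 * Nat.card (TreeAddr m r D) :=
  (Nat.pow_le_two_mul_one_add_mul_geom_sum hD m).trans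
    (Nat.mul_le_mul_left 2 (one_add_mul_geom_sum_le_card hrD))

end TreeAddr

open SimpleGraph

def cliqueWithTrees (t m r D : ℕ) : SimpleGraph (Fin (t + 1) × TreeAddr m r D) :=
  hangingForest (fun v => v.2.1.length) (fun v => (v.1, v.2.tail))

namespace cliqueWithTrees

variable {t m r D : ℕ}

theorem length_tail_add_one (v : Fin (t + 1) × TreeAddr m r D) (hv : v.2.1.length ≠ 0) :
    v.2.tail.1.length + 1 = v.2.1.length := by
  rw [TreeAddr.tail, List.length_tail]
  omega

theorem isChordal : IsChordal (cliqueWithTrees t m r D) :=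
  hangingForest.isChordal length_tail_add_one

theorem treewidthLE (ht : 1 ≤ t) : TreewidthLE (cliqueWithTrees t m r D) t := by
  refine ⟨_, le_rfl, isChordal, hangingForest.cliqueFree length_tail_add_one (f := Prod.fst)
    (fun u hu v hv huv => Prod.ext huv (Subtype.ext ?_)) (by omega) (by simp)⟩
  simp only [Set.mem_ofPred_eq, List.length_eq_zero_iff] at hu hv
  rw [hu, hv]

instance : Nonempty (Fin (t + 1) × TreeAddr m r D) := ⟨(0, ⟨[], Nat.zero_le m, by simp⟩)⟩

theorem connected : (cliqueWithTrees t m r D).Connected :=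
  hangingForest.connected length_tail_add_one

theorem exists_walk_length_le (u v : Fin (t + 1) × TreeAddr m r D) :
    ∃ q : (cliqueWithTrees t m r D).Walk u v, q.length ≤ 2 * m + 1 := by
  obtain ⟨q, hq⟩ : ∃ q : (cliqueWithTrees t m r D).Walk u v,
      q.length ≤ u.2.1.length + v.2.1.length + 1 :=
    hangingForest.exists_walk_length_le length_tail_add_one u v
  refine ⟨q, hq.trans ?_⟩
  have := u.2.2.1
  have := v.2.2.1
  omega

theorem exists_eq_cons_of_tail_eq {v w : Fin (t + 1) × TreeAddr m r D} (hw : w.2.1.length ≠ 0)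
    (h : (w.1, w.2.tail) = v) : ∃ x, w.1 = v.1 ∧ w.2.1 = x :: v.2.1 := by
  obtain ⟨i, _ | ⟨x, l⟩, _⟩ := w
  · simp at hw
  · subst h
    exact ⟨x, rfl, rfl⟩

theorem ncard_children_le (v : Fin (t + 1) × TreeAddr m r D) :
    {w : Fin (t + 1) × TreeAddr m r D | w.2.1.length ≠ 0 ∧ (w.1, w.2.tail) = v}.ncard ≤
      if v.2.1 = [] then r else D := by
  refine (Set.ncard_le_ncard_of_injOn (fun w => (w.2.1.head?.map Fin.val).getD 0) ?_ ?_
    (Set.finite_Iio _)).trans (Set.ncard_Iio_nat _).le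
  · rintro w ⟨hw, hwv⟩
    obtain ⟨x, -, hx⟩ := exists_eq_cons_of_tail_eq hw hwv
    simp only [hx, List.head?_cons, Option.map_some, Option.getD_some, Set.mem_Iio]
    split_ifs with hv
    · exact w.2.2.2 x (by simp [hx, hv])
    · exact x.2
  · rintro w ⟨hw, hwv⟩ w' ⟨hw', hwv'⟩ hww'
    obtain ⟨x, h₁, h₂⟩ := exists_eq_cons_of_tail_eq hw hwv
    obtain ⟨x', h₁', h₂'⟩ := exists_eq_cons_of_tail_eq hw' hwv'
    simp only [h₂, h₂', List.head?_cons, Option.map_some, Option.getD_some] at hww'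
    exact Prod.ext (h₁.trans h₁'.symm) (Subtype.ext (by rw [h₂, h₂', Fin.ext hww']))

theorem ncard_neighborSet_le (v : Fin (t + 1) × TreeAddr m r D) :
    ((cliqueWithTrees t m r D).neighborSet v).ncard ≤ max (t + r) (D + 1) := by
  have hchildren := ncard_children_le v
  by_cases hv : v.2.1 = []
  · have hroots : {w : Fin (t + 1) × TreeAddr m r D | w.2.1.length = 0 ∧ w ≠ v}.ncard ≤ t := by
      refine (Set.ncard_le_ncard_of_injOn Prod.fst (t := {v.1}ᶜ) ?_ ?_).trans ?_
      · rintro w ⟨hw, hwv⟩ (h : w.1 = v.1)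
        refine hwv (Prod.ext h (Subtype.ext ?_))
        rw [hv, ← List.length_eq_zero_iff, hw]
      · rintro w ⟨hw, -⟩ w' ⟨hw', -⟩ h
        refine Prod.ext h (Subtype.ext ?_)
        rw [List.length_eq_zero_iff.mp hw, List.length_eq_zero_iff.mp hw']
      · rw [Set.ncard_compl, Set.ncard_singleton, Nat.card_eq_fintype_card, Fintype.card_fin]
        omega
    rw [if_pos hv] at hchildren
    have hsub : (cliqueWithTrees t m r D).neighborSet v ⊆
        {w | w.2.1.length = 0 ∧ w ≠ v} ∪ {w | w.2.1.length ≠ 0 ∧ (w.1, w.2.tail) = v} :=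
      hangingForest.neighborSet_subset_of_depth_eq_zero (List.length_eq_zero_iff.mpr hv)
    have := (Set.ncard_le_ncard hsub).trans (Set.ncard_union_le _ _)
    omega
  · rw [if_neg hv] at hchildren
    have hsub : (cliqueWithTrees t m r D).neighborSet v ⊆
        insert (v.1, v.2.tail) {w | w.2.1.length ≠ 0 ∧ (w.1, w.2.tail) = v} :=
      hangingForest.neighborSet_subset_of_depth_ne_zero (mt List.length_eq_zero_iff.mp hv)
    have := (Set.ncard_le_ncard hsub).trans (Set.ncard_insert_le _ _)
    omega

end cliqueWithTrees

theorem treewidth_lower_bound_odd_general (k t Δ : ℕ) (hodd : Odd k)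
    (ht : 2 ≤ t) (hΔ : 2 * t - 2 ≤ Δ) :
    ∃ (n : ℕ) (G : SimpleGraph (Fin n)),
      (∀ v, (G.neighborSet v).ncard ≤ Δ) ∧
      G.Connected ∧
      (∀ u v, G.dist u v ≤ k) ∧
      TreewidthLE G t ∧
      (t + 1) * (Δ - 1) ^ ((k - 1) / 2) ≤ 2 * n := by
  obtain ⟨m, rfl⟩ := hodd
  let G := cliqueWithTrees t m (Δ - t) (Δ - 1)
  let e := Finite.equivFin (Fin (t + 1) × TreeAddr m (Δ - t) (Δ - 1))
  refine ⟨_, G.map e.toEmbedding, fun v => ?_, (Iso.map e G).connected_iff.mp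
    cliqueWithTrees.connected, fun u v => ?_, (cliqueWithTrees.treewidthLE (by omega)).map e, ?_⟩
  · obtain ⟨v, rfl⟩ := e.surjective v
    rw [← Equiv.coe_toEmbedding, neighborSet_map,
      Set.ncard_image_of_injective _ e.toEmbedding.injective]
    exact (cliqueWithTrees.ncard_neighborSet_le _).trans (by omega)
  · obtain ⟨u, rfl⟩ := e.surjective u
    obtain ⟨v, rfl⟩ := e.surjective v
    obtain ⟨q, hq⟩ := cliqueWithTrees.exists_walk_length_le u v
    exact (dist_le (q.map (Iso.map e G).toHom)).trans (by rw [Walk.length_map]; omega)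
  · rw [Nat.card_prod, Nat.card_eq_fintype_card (α := Fin (t + 1)), Fintype.card_fin,
      show (2 * m + 1 - 1) / 2 = m by omega, mul_left_comm]
    exact Nat.mul_le_mul_left _ (TreeAddr.pow_le_two_mul_card (by omega) (by omega))

/-- For all integers `k ≥ 1`, `t ≥ 2`, and `Δ ≥ 2t−2` with `k` odd, there
exists a graph with maximum degree at most `Δ`, diameter at most `k`, treewidth
at most `t`, and at least `(1/2)(t+1)(Δ−1)^{(k−1)/2}` vertices. -/
theorem treewidth_lower_bound_odd (k t Δ : ℕ) (hk : 1 ≤ k) (hodd : Odd k)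
    (ht : 2 ≤ t) (hΔ : 2 * t - 2 ≤ Δ) :
    ∃ (n : ℕ) (G : SimpleGraph (Fin n)),
      (∀ v, (G.neighborSet v).ncard ≤ Δ) ∧
      G.Connected ∧
      (∀ u v, G.dist u v ≤ k) ∧
      TreewidthLE G t ∧
      (t + 1) * (Δ - 1) ^ ((k - 1) / 2) ≤ 2 * n :=
  treewidth_lower_bound_odd_general k t Δ hodd ht hΔ
end

section
/- Let H₁ and H₂ be pseudographs (loops allowed) that are k-good, with maximum degrees Δ₁ and Δ₂ respectively. Then the direct (tensor) product H₁ × H₂ has |V(H₁)|·|V(H₂)| vertices, maximum degree at most Δ₁Δ₂, and diameter at most k. Moreover, if H₂ is loopless and c-colourable, then H₁ × H₂ is c-colourable. -/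
/-- `RelWalk H ℓ v w`: there is a walk of length exactly `ℓ` from `v` to `w` in
the pseudograph with adjacency relation `H`. -/
def RelWalk {α : Type*} (H : α → α → Prop) (ℓ : ℕ) (v w : α) : Prop :=
  ∃ f : ℕ → α, f 0 = v ∧ f ℓ = w ∧ ∀ i < ℓ, H (f i) (f (i + 1))

/-- A pseudograph is `k`-good if between any two (not necessarily distinct)
vertices there is a walk of length exactly `k`. -/
def KGood {α : Type*} (H : α → α → Prop) (k : ℕ) : Prop :=
  ∀ v w : α, RelWalk H k v w

/-- Let `H₁` and `H₂` be `k`-good pseudographs (symmetric relations, loops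
allowed; a loop contributes 1 to the degree) with maximum degrees `Δ₁` and `Δ₂`
respectively. Then the direct product `H₁ × H₂` has `|V(H₁)|·|V(H₂)|` vertices,
maximum degree at most `Δ₁Δ₂`, and diameter at most `k`. Moreover, if `H₂` is
loopless and `c`-colourable, then `H₁ × H₂` is `c`-colourable. -/
theorem direct_product_k_good {V₁ V₂ : Type*} [Fintype V₁] [Fintype V₂]
    (H₁ : V₁ → V₁ → Prop) (H₂ : V₂ → V₂ → Prop)
    (hs₁ : Symmetric H₁) (hs₂ : Symmetric H₂)
    (k Δ₁ Δ₂ c : ℕ)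
    (hg₁ : KGood H₁ k) (hg₂ : KGood H₂ k)
    (hd₁ : ∀ v, {w | H₁ v w}.ncard ≤ Δ₁) (hd₂ : ∀ x, {y | H₂ x y}.ncard ≤ Δ₂) :
    Fintype.card (V₁ × V₂) = Fintype.card V₁ * Fintype.card V₂ ∧
    (∀ p : V₁ × V₂, {q : V₁ × V₂ | H₁ p.1 q.1 ∧ H₂ p.2 q.2}.ncard ≤ Δ₁ * Δ₂) ∧
    (∀ p q : V₁ × V₂, ∃ ℓ ≤ k,
      RelWalk (fun a b : V₁ × V₂ => H₁ a.1 b.1 ∧ H₂ a.2 b.2) ℓ p q) ∧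
    ((∀ x, ¬H₂ x x) → (∃ col : V₂ → Fin c, ∀ x y, H₂ x y → col x ≠ col y) →
      ∃ col : V₁ × V₂ → Fin c,
        ∀ p q : V₁ × V₂, H₁ p.1 q.1 ∧ H₂ p.2 q.2 → col p ≠ col q) := by
  refine ⟨Fintype.card_prod _ _, ?_, ?_, ?_⟩
  · intro p
    have hset : {q : V₁ × V₂ | H₁ p.1 q.1 ∧ H₂ p.2 q.2}
        = {w | H₁ p.1 w} ×ˢ {y | H₂ p.2 y} := by
      ext q; simp [Set.mem_prod]
    rw [hset]
    classical
    rw [Set.ncard_eq_toFinset_card', Set.toFinset_prod, Finset.card_product,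
      ← Set.ncard_eq_toFinset_card', ← Set.ncard_eq_toFinset_card']
    exact Nat.mul_le_mul (hd₁ p.1) (hd₂ p.2)
  · intro p q
    obtain ⟨f₁, hf₁0, hf₁k, hf₁⟩ := hg₁ p.1 q.1
    obtain ⟨f₂, hf₂0, hf₂k, hf₂⟩ := hg₂ p.2 q.2
    exact ⟨k, le_refl k, fun i => (f₁ i, f₂ i), by simp [hf₁0, hf₂0],
      by simp [hf₁k, hf₂k], fun i hi => ⟨hf₁ i hi, hf₂ i hi⟩⟩
  · rintro _ ⟨col₂, hcol₂⟩
    exact ⟨fun p => col₂ p.2, fun p q h => hcol₂ _ _ h.2⟩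
end
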